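/- arXiv:1809.05429 — 10 statements merged into one kernel-verified Lean document; each statement's English description precedes it below -/
import Mathlib

section
/- Let n ≥ 2 be even. If a and b are two elements generating the dicyclic group G_n of order 4n, then the multiset of orders {orderOf a, orderOf b, orderOf (a*b)} is equal to the multiset {4, 4, 2n}. -/
open QuaternionGroup

/-- The subgroup of `QuaternionGroup n` consisting of `a m` for `m ∈ Z` and `xa m` for
`m - c ∈ Z`, where `Z` is an additive subgroup of `ZMod (2*n)` containing `n`. -/
def lineSubgroup (n : ℕ) (c : ZMod (2 * n)) (Z : AddSubgroup (ZMod (2 * n)))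
    (hnZ : ((n : ℕ) : ZMod (2 * n)) ∈ Z) : Subgroup (QuaternionGroup n) where
  carrier := {g | match g with | .a m => m ∈ Z | .xa m => m - c ∈ Z}
  one_mem' := by
    show (0 : ZMod (2 * n)) ∈ Z
    exact Z.zero_mem
  mul_mem' := by
    rintro (m | m) (m' | m') hm hm'
    · exact Z.add_mem hm hm'
    · show m' - m - c ∈ Z
      have : m' - m - c = (m' - c) - m := by ring
      rw [this]
      exact Z.sub_mem hm' hm
    · show m + m' - c ∈ Z
      have : m + m' - c = (m - c) + m' := by ring
      rw [this]
      exact Z.add_mem hm hm'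
    · show ((n : ℕ) : ZMod (2 * n)) + m' - m ∈ Z
      have : ((n : ℕ) : ZMod (2 * n)) + m' - m = (n : ZMod (2 * n)) + ((m' - c) - (m - c)) := by
        ring
      rw [this]
      exact Z.add_mem hnZ (Z.sub_mem hm' hm)
  inv_mem' := by
    rintro (m | m) hm
    · exact Z.neg_mem hm
    · show ((n : ℕ) : ZMod (2 * n)) + m - c ∈ Z
      have : ((n : ℕ) : ZMod (2 * n)) + m - c = (n : ZMod (2 * n)) + (m - c) := by ring
      rw [this]
      exact Z.add_mem hnZ hm

lemma mem_lineSubgroup_a (n : ℕ) (c : ZMod (2 * n)) (Z : AddSubgroup (ZMod (2 * n)))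
    (hnZ : ((n : ℕ) : ZMod (2 * n)) ∈ Z) (m : ZMod (2 * n)) :
    QuaternionGroup.a m ∈ lineSubgroup n c Z hnZ ↔ m ∈ Z := Iff.rfl

lemma mem_lineSubgroup_xa (n : ℕ) (c : ZMod (2 * n)) (Z : AddSubgroup (ZMod (2 * n)))
    (hnZ : ((n : ℕ) : ZMod (2 * n)) ∈ Z) (m : ZMod (2 * n)) :
    QuaternionGroup.xa m ∈ lineSubgroup n c Z hnZ ↔ m - c ∈ Z := Iff.rfl

/-- The subgroup of rotations. -/
def rotSubgroup (n : ℕ) : Subgroup (QuaternionGroup n) where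
  carrier := {g | match g with | .a _ => True | .xa _ => False}
  one_mem' := trivial
  mul_mem' := by rintro (m | m) (m' | m') hm hm' <;> trivial
  inv_mem' := by rintro (m | m) hm <;> trivial

/-- Key number-theoretic lemma. -/
lemma key_orderOf (n : ℕ) (hn : 2 ≤ n) (hneven : Even n) (u : ZMod (2 * n))
    (h : (1 : ZMod (2 * n)) ∈ AddSubgroup.closure ({u, ((n : ℕ) : ZMod (2 * n))} :
      Set (ZMod (2 * n)))) :
    orderOf (QuaternionGroup.a u) = 2 * n := by
  haveI : NeZero n := ⟨by omega⟩
  obtain ⟨s, t, hst⟩ := AddSubgroup.mem_closure_pair.mp h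
  -- move to an integer divisibility statement
  have h2n : ((2 * n : ℕ) : ℤ) ∣ (s * u.val + t * n - 1) := by
    rw [← ZMod.intCast_zmod_eq_zero_iff_dvd]
    push_cast
    rw [ZMod.natCast_val, ZMod.cast_id]
    rw [← hst]
    push_cast [zsmul_eq_mul]
    ring
  have hd : Nat.Coprime u.val n := by
    have hdvd : ((Nat.gcd u.val n : ℕ) : ℤ) ∣ 1 := by
      have h1 : ((Nat.gcd u.val n : ℕ) : ℤ) ∣ (s * u.val + t * n) := by
        refine dvd_add (Dvd.dvd.mul_left ?_ s) (Dvd.dvd.mul_left ?_ t)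
        · exact_mod_cast Int.natCast_dvd_natCast.mpr (Nat.gcd_dvd_left _ _)
        · exact_mod_cast Int.natCast_dvd_natCast.mpr (Nat.gcd_dvd_right _ _)
      have h2 : ((Nat.gcd u.val n : ℕ) : ℤ) ∣ ((2 * n : ℕ) : ℤ) := by
        exact_mod_cast Int.natCast_dvd_natCast.mpr
          (dvd_mul_of_dvd_right (Nat.gcd_dvd_right _ _) 2)
      have := dvd_sub h1 (h2.trans h2n)
      simpa using this
    exact Nat.eq_one_of_dvd_one (by exact_mod_cast hdvd)
  have hodd : Odd u.val := by
    rcases Nat.even_or_odd u.val with he | ho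
    · exfalso
      obtain ⟨k, hk⟩ := he
      obtain ⟨l, hl⟩ := hneven
      have h2 : 2 ∣ Nat.gcd u.val n := Nat.dvd_gcd ⟨k, by omega⟩ ⟨l, by omega⟩
      rw [hd] at h2
      omega
    · exact ho
  have hcop : Nat.Coprime u.val (2 * n) :=
    Nat.Coprime.mul_right (Nat.coprime_two_right.mpr hodd) hd
  rw [QuaternionGroup.orderOf_a, Nat.Coprime.gcd_eq_one hcop.symm, Nat.div_one]

lemma ms_swap1 (x y : ℕ) : ({x, y, y} : Multiset ℕ) = {y, y, x} := by
  show x ::ₘ y ::ₘ y ::ₘ 0 = y ::ₘ y ::ₘ x ::ₘ 0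
  rw [Multiset.cons_swap x y, Multiset.cons_swap x y]

lemma ms_swap2 (x y : ℕ) : ({y, x, y} : Multiset ℕ) = {y, y, x} := by
  show y ::ₘ x ::ₘ y ::ₘ 0 = y ::ₘ y ::ₘ x ::ₘ 0
  rw [Multiset.cons_swap x y]

/-- For `n ≥ 2` even, every generating pair `(a, b)` of the dicyclic group `G_n`
(of order `4n`, Mathlib's `QuaternionGroup n`) has order-multiset
`{orderOf a, orderOf b, orderOf (a*b)} = {4, 4, 2n}`. -/
theorem dicyclic_generating_pair_orders_of_even (n : ℕ) (hn : 2 ≤ n) (hneven : Even n)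
    (a b : QuaternionGroup n)
    (hgen : Subgroup.closure ({a, b} : Set (QuaternionGroup n)) = ⊤) :
    ({orderOf a, orderOf b, orderOf (a * b)} : Multiset ℕ) = ({4, 4, 2 * n} : Multiset ℕ) := by
  haveI : NeZero n := ⟨by omega⟩
  rcases a with i | i <;> rcases b with j | j
  · -- both rotations: contradiction
    exfalso
    have hxa : (QuaternionGroup.xa 0 : QuaternionGroup n) ∈
        Subgroup.closure ({QuaternionGroup.a i, QuaternionGroup.a j} :
          Set (QuaternionGroup n)) := hgen ▸ Subgroup.mem_top _
    have hle : Subgroup.closure ({QuaternionGroup.a i, QuaternionGroup.a j} :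
        Set (QuaternionGroup n)) ≤ rotSubgroup n := by
      rw [Subgroup.closure_le]
      rintro g (rfl | rfl) <;> trivial
    exact hle hxa
  · -- a i, xa j
    set Z := AddSubgroup.closure ({i, ((n : ℕ) : ZMod (2 * n))} : Set (ZMod (2 * n))) with hZ
    have hnZ : ((n : ℕ) : ZMod (2 * n)) ∈ Z :=
      AddSubgroup.subset_closure (Set.mem_insert_iff.mpr (Or.inr rfl))
    have hle : Subgroup.closure ({QuaternionGroup.a i, QuaternionGroup.xa j} :
        Set (QuaternionGroup n)) ≤ lineSubgroup n j Z hnZ := by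
      rw [Subgroup.closure_le]
      rintro g (rfl | rfl)
      · exact AddSubgroup.subset_closure (Set.mem_insert _ _)
      · show j - j ∈ Z
        rw [sub_self]; exact Z.zero_mem
    have h1 : (1 : ZMod (2 * n)) ∈ Z :=
      hle (hgen ▸ Subgroup.mem_top (QuaternionGroup.a 1))
    rw [QuaternionGroup.a_mul_xa, key_orderOf n hn hneven i h1, QuaternionGroup.orderOf_xa,
      QuaternionGroup.orderOf_xa]
    exact ms_swap1 (2 * n) 4
  · -- xa i, a j
    set Z := AddSubgroup.closure ({j, ((n : ℕ) : ZMod (2 * n))} : Set (ZMod (2 * n))) with hZ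
    have hnZ : ((n : ℕ) : ZMod (2 * n)) ∈ Z :=
      AddSubgroup.subset_closure (Set.mem_insert_iff.mpr (Or.inr rfl))
    have hle : Subgroup.closure ({QuaternionGroup.xa i, QuaternionGroup.a j} :
        Set (QuaternionGroup n)) ≤ lineSubgroup n i Z hnZ := by
      rw [Subgroup.closure_le]
      rintro g (rfl | rfl)
      · show i - i ∈ Z
        rw [sub_self]; exact Z.zero_mem
      · exact AddSubgroup.subset_closure (Set.mem_insert _ _)
    have h1 : (1 : ZMod (2 * n)) ∈ Z :=
      hle (hgen ▸ Subgroup.mem_top (QuaternionGroup.a 1))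
    rw [QuaternionGroup.xa_mul_a, key_orderOf n hn hneven j h1, QuaternionGroup.orderOf_xa,
      QuaternionGroup.orderOf_xa]
    exact ms_swap2 (2 * n) 4
  · -- xa i, xa j
    set u : ZMod (2 * n) := ((n : ℕ) : ZMod (2 * n)) + j - i with hu
    set Z := AddSubgroup.closure ({u, ((n : ℕ) : ZMod (2 * n))} : Set (ZMod (2 * n))) with hZ
    have hnZ : ((n : ℕ) : ZMod (2 * n)) ∈ Z :=
      AddSubgroup.subset_closure (Set.mem_insert_iff.mpr (Or.inr rfl))
    have huZ : u ∈ Z := AddSubgroup.subset_closure (Set.mem_insert _ _)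
    have hle : Subgroup.closure ({QuaternionGroup.xa i, QuaternionGroup.xa j} :
        Set (QuaternionGroup n)) ≤ lineSubgroup n i Z hnZ := by
      rw [Subgroup.closure_le]
      rintro g (rfl | rfl)
      · show i - i ∈ Z
        rw [sub_self]; exact Z.zero_mem
      · show j - i ∈ Z
        have : j - i = u - ((n : ℕ) : ZMod (2 * n)) := by rw [hu]; ring
        rw [this]
        exact Z.sub_mem huZ hnZ
    have h1 : (1 : ZMod (2 * n)) ∈ Z :=
      hle (hgen ▸ Subgroup.mem_top (QuaternionGroup.a 1))
    rw [QuaternionGroup.xa_mul_xa, QuaternionGroup.orderOf_xa, QuaternionGroup.orderOf_xa,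
      show ((n : ZMod (2 * n)) + j - i) = u from rfl, key_orderOf n hn hneven u h1]
end

section
/- Let n ≥ 3 be odd. If a and b are two elements generating the dicyclic group G_n of order 4n, then the multiset of orders {orderOf a, orderOf b, orderOf (a*b)} is equal either to the multiset {4, 4, 2n} or to the multiset {4, 4, n}. -/
/-!
The elements `a k` form a cyclic subgroup of index 2, and every `xa k` has order 4. A generating
pair cannot lie in that subgroup, so exactly two of `a`, `b`, `a * b` have the form `xa _`, and the
third one, `a k`, generates the group together with one of them. Since `xa i ^ 2 = a n`, the
subgroup generated by `xa i` and `a k` meets the cyclic subgroup in the multiples of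
`a (gcd n k)`; hence `gcd n k = 1`, so `gcd (2n) k ∣ 2` and `a k` has order `2n` or `n`.
-/

theorem Subgroup.closure_pair_mul_right {G : Type*} [Group G] (x y : G) :
    closure {x, x * y} = closure {x, y} := by
  have hx {z : G} : x ∈ closure {x, z} := subset_closure (Set.mem_insert x _)
  have hz {z : G} : z ∈ closure {x, z} := subset_closure (Set.mem_insert_of_mem x rfl)
  apply le_antisymm <;> rw [closure_le, Set.insert_subset_iff, Set.singleton_subset_iff]
  · exact ⟨hx, mul_mem hx hz⟩
  · exact ⟨hx, by simpa using mul_mem (inv_mem hx) (hz (z := x * y))⟩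

namespace QuaternionGroup

variable {n : ℕ}

/-- The subgroup generated by `a d` and `xa i`. -/
def dvdSubgroup (d : ZMod (2 * n)) (hd : d ∣ (n : ZMod (2 * n))) (i : ZMod (2 * n)) :
    Subgroup (QuaternionGroup n) where
  carrier := {x | match x with
    | a k => d ∣ k
    | xa k => d ∣ k - i}
  one_mem' := dvd_zero d
  mul_mem' := by
    rintro (k | k) (l | l) hk hl
    · exact dvd_add hk hl
    · exact (dvd_sub hl hk).trans (dvd_of_eq (by ring))
    · exact (dvd_add hk hl).trans (dvd_of_eq (by ring))
    · exact (dvd_sub (dvd_add hd hl) hk).trans (dvd_of_eq (by ring))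
  inv_mem' := by
    rintro (k | k) hk
    · exact dvd_neg.mpr hk
    · exact (dvd_add hd hk).trans (dvd_of_eq (by ring))

variable {d : ZMod (2 * n)} {hd : d ∣ (n : ZMod (2 * n))} {i k : ZMod (2 * n)}

theorem a_mem_dvdSubgroup : a k ∈ dvdSubgroup d hd i ↔ d ∣ k := Iff.rfl

theorem xa_mem_dvdSubgroup : xa k ∈ dvdSubgroup d hd i ↔ d ∣ k - i := Iff.rfl

variable [NeZero n]

theorem coprime_val_of_closure_xa_a_eq_top (h : Subgroup.closure {xa i, a k} = ⊤) :
    n.Coprime k.val := by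
  have hd : ((n.gcd k.val : ℕ) : ZMod (2 * n)) ∣ n := Nat.cast_dvd_cast (Nat.gcd_dvd_left _ _)
  have htop : dvdSubgroup _ hd i = ⊤ := by
    rw [eq_top_iff, ← h, Subgroup.closure_le, Set.insert_subset_iff, Set.singleton_subset_iff]
    refine ⟨xa_mem_dvdSubgroup.mpr ((sub_self i).symm ▸ dvd_zero _), a_mem_dvdSubgroup.mpr ?_⟩
    exact (Nat.cast_dvd_cast (Nat.gcd_dvd_right n k.val)).trans
      (dvd_of_eq (ZMod.natCast_zmod_val k))
  have hunit : IsUnit ((n.gcd k.val : ℕ) : ZMod (2 * n)) :=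
    isUnit_of_dvd_one (a_mem_dvdSubgroup.mp (htop ▸ Subgroup.mem_top (a 1)))
  rw [ZMod.isUnit_iff_coprime] at hunit
  exact hunit.eq_one_of_dvd (dvd_mul_of_dvd_right (Nat.gcd_dvd_left _ _) 2)

theorem orderOf_a_of_coprime_val (h : n.Coprime k.val) :
    orderOf (a k) = 2 * n ∨ orderOf (a k) = n := by
  have hgcd : Nat.gcd (2 * n) k.val ∣ 2 :=
    calc Nat.gcd (2 * n) k.val ∣ Nat.gcd (2 * n) (2 * k.val) :=
          Nat.gcd_dvd_gcd_mul_left_right _ _ _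
      _ = 2 := by rw [Nat.gcd_mul_left, h, mul_one]
  rw [orderOf_a]
  rcases (Nat.dvd_prime Nat.prime_two).mp hgcd with h1 | h2
  · exact .inl (by rw [h1, Nat.div_one])
  · exact .inr (by rw [h2, Nat.mul_div_cancel_left _ two_pos])

theorem orderOf_a_of_closure_xa_a_eq_top (h : Subgroup.closure {xa i, a k} = ⊤) :
    orderOf (a k) = 2 * n ∨ orderOf (a k) = n :=
  orderOf_a_of_coprime_val (coprime_val_of_closure_xa_a_eq_top h)

theorem closure_a_a_ne_top (i j : ZMod (2 * n)) : Subgroup.closure {a i, a j} ≠ ⊤ := by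
  have ha (k : ZMod (2 * n)) : a k ∈ Subgroup.zpowers (a 1) := by
    rw [← ZMod.natCast_zmod_val k, ← a_one_pow]
    exact Subgroup.npow_mem_zpowers _ _
  intro h
  have hle : Subgroup.closure {a i, a j} ≤ Subgroup.zpowers (a 1) := by
    rw [Subgroup.closure_le, Set.insert_subset_iff, Set.singleton_subset_iff]
    exact ⟨ha i, ha j⟩
  rw [h, top_le_iff] at hle
  have hxa : xa 0 ∈ Submonoid.powers (a 1 : QuaternionGroup n) := by
    rw [mem_powers_iff_mem_zpowers, hle]
    exact Subgroup.mem_top _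
  obtain ⟨m, hm⟩ := hxa
  cases (a_one_pow m).symm.trans hm

end QuaternionGroup

theorem dicyclic_generating_pair_orders_of_odd_general (n : ℕ) (hn : 3 ≤ n)
    (a b : QuaternionGroup n)
    (hgen : Subgroup.closure ({a, b} : Set (QuaternionGroup n)) = ⊤) :
    ({orderOf a, orderOf b, orderOf (a * b)} : Multiset ℕ) = ({4, 4, 2 * n} : Multiset ℕ) ∨
    ({orderOf a, orderOf b, orderOf (a * b)} : Multiset ℕ) = ({4, 4, n} : Multiset ℕ) := by
  open QuaternionGroup in
  have : NeZero n := ⟨by omega⟩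
  rcases a with i | i <;> rcases b with j | j
  · exact absurd hgen (closure_a_a_ne_top i j)
  · rw [Set.pair_comm] at hgen
    rcases orderOf_a_of_closure_xa_a_eq_top hgen with h | h <;>
      simp [h, a_mul_xa, orderOf_xa, ← Multiset.cons_zero, Multiset.cons_swap _ 4]
  · rcases orderOf_a_of_closure_xa_a_eq_top hgen with h | h <;>
      simp [h, xa_mul_a, orderOf_xa, ← Multiset.cons_zero, Multiset.cons_swap _ 4]
  · rw [← Subgroup.closure_pair_mul_right, xa_mul_xa] at hgen
    rcases orderOf_a_of_closure_xa_a_eq_top hgen with h | h <;> simp [h, xa_mul_xa, orderOf_xa]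

/-- For `n ≥ 3` odd, every generating pair `(a, b)` of the dicyclic group `G_n`
(of order `4n`, Mathlib's `QuaternionGroup n`) has order-multiset
`{orderOf a, orderOf b, orderOf (a*b)}` equal to `{4, 4, 2n}` or to `{4, 4, n}`. -/
theorem dicyclic_generating_pair_orders_of_odd (n : ℕ) (hn : 3 ≤ n) (hnodd : Odd n)
    (a b : QuaternionGroup n)
    (hgen : Subgroup.closure ({a, b} : Set (QuaternionGroup n)) = ⊤) :
    ({orderOf a, orderOf b, orderOf (a * b)} : Multiset ℕ) = ({4, 4, 2 * n} : Multiset ℕ) ∨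
    ({orderOf a, orderOf b, orderOf (a * b)} : Multiset ℕ) = ({4, 4, n} : Multiset ℕ) :=
  dicyclic_generating_pair_orders_of_odd_general n hn a b hgen
end

section
/- Let n ≥ 2. If (a,b) and (a',b') are two generating pairs of the dicyclic group G_n of order 4n with orderOf a = orderOf b = orderOf a' = orderOf b' = 4 and orderOf (a*b) = orderOf (a'*b') = 2n, then there exists a group automorphism φ of G_n with φ(a) = a' and φ(b) = b'. -/
/-!
Write the elements of `QuaternionGroup n` as `a i` and `xa i`. For `n ≠ 2` the order conditions
force both generators to be of the form `xa`, and `xa i * xa j = a (n + j - i)` has order `2n`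
exactly when `n + j - i` is a unit of `ZMod (2n)`. For every unit `u` the affine maps
`a k ↦ a (u k)`, `xa k ↦ xa (m + u k)` are automorphisms (since `u` is odd, `u n = n`), and a
suitable one sends `(xa i, xa j)` to the standard pair `(xa 0, xa (1 - n))`. For `n = 2`
(the group `Q₈`) a power of the automorphism cycling `i ↦ j ↦ k` first moves both generators
out of the rotation subgroup.
-/

theorem ZMod.unit_mul_half_modulus {n : ℕ} [NeZero n] (u : (ZMod (2 * n))ˣ) :
    (u : ZMod (2 * n)) * n = n := by
  obtain ⟨c, hc⟩ : Odd (u : ZMod (2 * n)).val :=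
    ((ZMod.val_coe_unit_coprime u).coprime_dvd_right (dvd_mul_right 2 n)).odd_of_right
  have h2n : (2 * n : ZMod (2 * n)) = 0 := mod_cast ZMod.natCast_self (2 * n)
  rw [← ZMod.natCast_zmod_val (u : ZMod (2 * n)), hc]
  push_cast
  linear_combination c * h2n

namespace QuaternionGroup

variable {n : ℕ} [NeZero n]

theorem isUnit_of_orderOf_a_eq {t : ZMod (2 * n)} (h : orderOf (a t) = 2 * n) : IsUnit t := by
  rw [orderOf_a] at h
  rw [← ZMod.natCast_zmod_val t, ZMod.isUnit_iff_coprime, Nat.coprime_comm]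
  exact (Nat.div_eq_self.mp h).resolve_left (NeZero.ne _)

def affineAut (u : (ZMod (2 * n))ˣ) (m : ZMod (2 * n)) : MulAut (QuaternionGroup n) where
  toFun
    | a i => a (u * i)
    | xa i => xa (m + u * i)
  invFun
    | a i => a (↑u⁻¹ * i)
    | xa i => xa (↑u⁻¹ * (i - m))
  left_inv := by rintro (i | i) <;> simp
  right_inv := by rintro (i | i) <;> simp
  map_mul' := by
    rintro (i | i) (j | j) <;>
      simp only [a_mul_a, a_mul_xa, xa_mul_a, xa_mul_xa, a.injEq, xa.injEq]
    case xa.xa => linear_combination ZMod.unit_mul_half_modulus u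
    all_goals ring

@[simp]
theorem affineAut_a (u : (ZMod (2 * n))ˣ) (m i : ZMod (2 * n)) :
    affineAut u m (a i) = a ((u : ZMod (2 * n)) * i) := rfl

@[simp]
theorem affineAut_xa (u : (ZMod (2 * n))ˣ) (m i : ZMod (2 * n)) :
    affineAut u m (xa i) = xa (m + (u : ZMod (2 * n)) * i) := rfl

theorem exists_mulAut_apply_xa_xa_eq (i j : ZMod (2 * n))
    (h : orderOf (xa i * xa j) = 2 * n) :
    ∃ φ : MulAut (QuaternionGroup n), φ (xa i) = xa 0 ∧ φ (xa j) = xa (1 - n) := by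
  rw [xa_mul_xa] at h
  obtain ⟨u, hu⟩ := isUnit_of_orderOf_a_eq h
  refine ⟨affineAut u⁻¹ (-(↑u⁻¹ * i)), by simp, ?_⟩
  rw [affineAut_xa, xa.injEq]
  linear_combination -(↑u⁻¹ : ZMod (2 * n)) * hu + u.inv_mul - ZMod.unit_mul_half_modulus u⁻¹

theorem exists_xa_of_orderOf_mul_eq {g h : QuaternionGroup n} (hn : n ≠ 2)
    (hg : orderOf g = 4) (hh : orderOf h = 4) (hgh : orderOf (g * h) = 2 * n) :
    (∃ i, g = xa i) ∧ (∃ j, h = xa j) := by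
  rcases g with i | i <;> rcases h with j | j
  · have hdvd : 2 * n ∣ 4 := by
      have hcomm : Commute (a i) (a j) := by simp [Commute, SemiconjBy, add_comm]
      simpa only [hgh, hg, hh, Nat.lcm_self] using hcomm.orderOf_mul_dvd_lcm
    have hdvd' : 4 ∣ 2 * n := hg ▸ orderOf_a i ▸ Nat.div_dvd_of_dvd (Nat.gcd_dvd_left _ _)
    have := Nat.dvd_antisymm hdvd hdvd'
    omega
  · rw [a_mul_xa, orderOf_xa] at hgh; omega
  · rw [xa_mul_a, orderOf_xa] at hgh; omega
  · exact ⟨⟨i, rfl⟩, ⟨j, rfl⟩⟩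

-- With `i = a 1`, `j = xa 0`, `k = xa 3` (so that `i * j = k`), this is the cycle `i ↦ j ↦ k ↦ i`.
def q8CycleFun : QuaternionGroup 2 → QuaternionGroup 2
  | a i => if i = 1 then xa 0 else if i = 3 then xa 2 else a i
  | xa i => if i = 0 then xa 3 else if i = 2 then xa 1 else a (-i)

def q8CycleAut : MulAut (QuaternionGroup 2) where
  toFun := q8CycleFun
  invFun g := q8CycleFun (q8CycleFun g)
  left_inv := by decide
  right_inv := by decide
  map_mul' := by decide

-- The elements of order 4 lie in `⟨i⟩`, `⟨j⟩`, `⟨k⟩`; `g` and `h` lie in two different ones,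
-- and the power of the cycle taking the third one to `⟨i⟩ = {a k}` does the job.
theorem exists_q8CycleAut_pow_apply_eq_xa (g h : QuaternionGroup 2) (hg : g ^ 2 ≠ 1)
    (hh : h ^ 2 ≠ 1) (hgh : (g * h) ^ 2 ≠ 1) :
    ∃ k : Fin 3, (∃ i, (q8CycleAut ^ (k : ℕ)) g = xa i) ∧
      (∃ j, (q8CycleAut ^ (k : ℕ)) h = xa j) := by
  revert g h
  decide

theorem exists_mulAut_apply_eq_xa {g h : QuaternionGroup n}
    (hg : orderOf g = 4) (hh : orderOf h = 4) (hgh : orderOf (g * h) = 2 * n) :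
    ∃ ρ : MulAut (QuaternionGroup n), (∃ i, ρ g = xa i) ∧ (∃ j, ρ h = xa j) := by
  rcases eq_or_ne n 2 with rfl | hn
  · have sq_ne_one {x : QuaternionGroup 2} (hx : orderOf x = 4) : x ^ 2 ≠ 1 :=
      pow_ne_one_of_lt_orderOf two_ne_zero (by omega)
    obtain ⟨k, hk⟩ :=
      exists_q8CycleAut_pow_apply_eq_xa g h (sq_ne_one hg) (sq_ne_one hh) (sq_ne_one hgh)
    exact ⟨_, hk⟩
  · exact ⟨1, exists_xa_of_orderOf_mul_eq hn hg hh hgh⟩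

theorem exists_mulAut_apply_eq_xa_zero_xa_one_sub {g h : QuaternionGroup n}
    (hg : orderOf g = 4) (hh : orderOf h = 4) (hgh : orderOf (g * h) = 2 * n) :
    ∃ φ : MulAut (QuaternionGroup n), φ g = xa 0 ∧ φ h = xa (1 - n) := by
  obtain ⟨ρ, ⟨i, hi⟩, ⟨j, hj⟩⟩ := exists_mulAut_apply_eq_xa hg hh hgh
  have hij : orderOf (xa i * xa j) = 2 * n := by
    rw [← hi, ← hj, ← map_mul, MulEquiv.orderOf_eq, hgh]
  obtain ⟨ψ, hψi, hψj⟩ := exists_mulAut_apply_xa_xa_eq i j hij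
  exact ⟨ρ.trans ψ, by simp [hi, hψi], by simp [hj, hψj]⟩

end QuaternionGroup

theorem dicyclic_generating_pairs_equivalent_signature_2n_general (n : ℕ) (hn : 2 ≤ n)
    (a b a' b' : QuaternionGroup n)
    (ha : orderOf a = 4) (hb : orderOf b = 4)
    (ha' : orderOf a' = 4) (hb' : orderOf b' = 4)
    (hab : orderOf (a * b) = 2 * n) (hab' : orderOf (a' * b') = 2 * n) :
    ∃ φ : MulAut (QuaternionGroup n), φ a = a' ∧ φ b = b' := by
  have : NeZero n := ⟨by omega⟩
  obtain ⟨φ, hφa, hφb⟩ := QuaternionGroup.exists_mulAut_apply_eq_xa_zero_xa_one_sub ha hb hab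
  obtain ⟨φ', hφa', hφb'⟩ := QuaternionGroup.exists_mulAut_apply_eq_xa_zero_xa_one_sub ha' hb' hab'
  exact ⟨φ.trans φ'.symm, by simp [hφa, ← hφa'], by simp [hφb, ← hφb']⟩

/-- For `n ≥ 2`, any two generating pairs of the dicyclic group `G_n`
(Mathlib's `QuaternionGroup n`) with orders `(4, 4)` and product of order `2n`
are related by a group automorphism of `G_n`. -/
theorem dicyclic_generating_pairs_equivalent_signature_2n (n : ℕ) (hn : 2 ≤ n)
    (a b a' b' : QuaternionGroup n)
    (hgen : Subgroup.closure ({a, b} : Set (QuaternionGroup n)) = ⊤)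
    (hgen' : Subgroup.closure ({a', b'} : Set (QuaternionGroup n)) = ⊤)
    (ha : orderOf a = 4) (hb : orderOf b = 4)
    (ha' : orderOf a' = 4) (hb' : orderOf b' = 4)
    (hab : orderOf (a * b) = 2 * n) (hab' : orderOf (a' * b') = 2 * n) :
    ∃ φ : MulAut (QuaternionGroup n), φ a = a' ∧ φ b = b' :=
  dicyclic_generating_pairs_equivalent_signature_2n_general n hn a b a' b' ha hb ha' hb' hab hab'
end

section
/- Let n ≥ 3 be odd. If (a,b) and (a',b') are two generating pairs of the dicyclic group G_n of order 4n with orderOf a = orderOf b = orderOf a' = orderOf b' = 4 and orderOf (a*b) = orderOf (a'*b') = n, then there exists a group automorphism φ of G_n with φ(a) = a' and φ(b) = b'. -/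
namespace QGAux
open QuaternionGroup
variable {n : ℕ}

/-- the candidate automorphism map -/
def myFun (u s : ZMod (2*n)) : QuaternionGroup n → QuaternionGroup n
  | .a i => .a (u * i)
  | .xa i => .xa (u * i + s)

lemma unit_mul_n (u : (ZMod (2*n))ˣ) [NeZero n] : (u : ZMod (2*n)) * (n : ZMod (2*n)) = n := by
  have hc : Nat.Coprime ((u : ZMod (2*n)).val) (2*n) := ZMod.val_coe_unit_coprime u
  have hodd : Odd ((u : ZMod (2*n)).val) := by
    rcases Nat.even_or_odd ((u : ZMod (2*n)).val) with he | ho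
    · exfalso
      have h2 : (2 : ℕ) ∣ Nat.gcd ((u : ZMod (2*n)).val) (2*n) :=
        Nat.dvd_gcd he.two_dvd ⟨n, rfl⟩
      rw [hc] at h2; omega
    · exact ho
  obtain ⟨m, hm⟩ := hodd
  have hval : (((u : ZMod (2*n)).val : ℕ) : ZMod (2*n)) = (u : ZMod (2*n)) :=
    ZMod.natCast_zmod_val _
  calc (u : ZMod (2*n)) * (n : ZMod (2*n))
      = (((u : ZMod (2*n)).val * n : ℕ) : ZMod (2*n)) := by push_cast [hval]; ring
    _ = ((m * (2*n) + n : ℕ) : ZMod (2*n)) := by rw [hm]; congr 1; ring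
    _ = n := by
        have h0 : ((2:ZMod (2*n)) * n) = 0 := by exact_mod_cast ZMod.natCast_self (2*n)
        push_cast
        linear_combination (m : ZMod (2*n)) * h0

/-- the automorphism given by a unit `u` and a shift `s`. -/
def myAut [NeZero n] (u : (ZMod (2*n))ˣ) (s : ZMod (2*n)) : MulAut (QuaternionGroup n) where
  toFun := myFun (u : ZMod (2*n)) s
  invFun := myFun ((u⁻¹ : (ZMod (2*n))ˣ) : ZMod (2*n)) (-(((u⁻¹ : (ZMod (2*n))ˣ) : ZMod (2*n)) * s))
  left_inv := by
    rintro (i | i) <;> simp only [myFun]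
    · rw [Units.inv_mul_cancel_left]
    · congr 1
      rw [mul_add, Units.inv_mul_cancel_left]
      ring
  right_inv := by
    rintro (i | i) <;> simp only [myFun]
    · rw [Units.mul_inv_cancel_left]
    · congr 1
      rw [mul_add, Units.mul_inv_cancel_left, mul_neg, Units.mul_inv_cancel_left]
      ring
  map_mul' := by
    rintro (i | i) (j | j) <;>
      simp only [a_mul_a, a_mul_xa, xa_mul_a, xa_mul_xa, myFun] <;> congr 1
    · ring
    · ring
    · ring
    · rw [mul_sub, mul_add, unit_mul_n]
      ring

@[simp] lemma myAut_xa [NeZero n] (u : (ZMod (2*n))ˣ) (s i : ZMod (2*n)) :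
    myAut u s (QuaternionGroup.xa i) = QuaternionGroup.xa ((u : ZMod (2*n)) * i + s) := rfl

lemma orderOf_a_ne_four (hn : 3 ≤ n) (hnodd : Odd n) (i : ZMod (2*n)) :
    orderOf (QuaternionGroup.a i) ≠ 4 := by
  haveI : NeZero n := ⟨by omega⟩
  rw [QuaternionGroup.orderOf_a]
  intro h
  obtain ⟨c, hc⟩ := Nat.gcd_dvd_left (2*n) i.val
  have hg0 : Nat.gcd (2*n) i.val ≠ 0 := by
    intro h0; rw [h0] at hc; omega
  have hcc := Nat.div_eq_of_eq_mul_left (Nat.pos_of_ne_zero hg0) (hc.trans (mul_comm _ _))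
  have hc4 : c = 4 := hcc.symm.trans h
  rw [hc4] at hc
  obtain ⟨m, hm⟩ := hnodd
  omega

lemma isUnit_sub (hn : 3 ≤ n) (hnodd : Odd n) (i j : ZMod (2*n))
    (h : orderOf (QuaternionGroup.a ((n : ZMod (2*n)) + j - i)) = n) :
    IsUnit (j - i) := by
  haveI : NeZero n := ⟨by omega⟩
  haveI : NeZero (2*n) := ⟨by omega⟩
  set k : ZMod (2*n) := (n : ZMod (2*n)) + j - i with hk
  rw [QuaternionGroup.orderOf_a] at h
  -- the gcd is 2
  have hg : Nat.gcd (2*n) k.val = 2 := by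
    obtain ⟨c, hc⟩ := Nat.gcd_dvd_left (2*n) k.val
    have hg0 : Nat.gcd (2*n) k.val ≠ 0 := by
      intro h0; rw [h0] at hc; omega
    have hcc := Nat.div_eq_of_eq_mul_left (Nat.pos_of_ne_zero hg0) (hc.trans (mul_comm _ _))
    have hcn : c = n := hcc.symm.trans h
    rw [hcn] at hc
    exact (Nat.eq_of_mul_eq_mul_right (by omega) hc).symm
  set v : ℕ := k.val with hv
  -- j - i = v + n as a natural number cast
  have hnn : ((n : ZMod (2*n)) + n) = 0 := by
    have := ZMod.natCast_self (2*n)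
    push_cast at this
    linear_combination this
  have hji : j - i = ((v + n : ℕ) : ZMod (2*n)) := by
    have hvk : ((v : ℕ) : ZMod (2*n)) = k := ZMod.natCast_zmod_val k
    push_cast [hvk, hk]
    linear_combination -hnn
  rw [hji, ZMod.isUnit_iff_coprime]
  -- v is even
  have hev : 2 ∣ v := hg ▸ Nat.gcd_dvd_right (2*n) v
  obtain ⟨m, hm⟩ := hnodd
  -- Coprime (v+n) 2
  have h2 : Nat.Coprime (v + n) 2 := by
    rw [Nat.coprime_two_right]
    obtain ⟨t, ht⟩ := hev
    exact ⟨t + m, by omega⟩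
  -- Coprime v n
  have hvn : Nat.Coprime v n := by
    have hd2 : Nat.gcd v n ∣ 2 := by
      rw [← hg]
      exact Nat.dvd_gcd ((Nat.gcd_dvd_right v n).trans ⟨2, by ring⟩) (Nat.gcd_dvd_left v n)
    have hdn : Nat.gcd v n ∣ n := Nat.gcd_dvd_right v n
    rcases (Nat.dvd_prime Nat.prime_two).mp hd2 with h1 | h1
    · exact h1
    · exfalso; obtain ⟨c, hc⟩ := h1 ▸ hdn; omega
  have hvn' : Nat.Coprime (v + n) n := Nat.coprime_add_self_left.mpr hvn
  exact Nat.Coprime.mul_right h2 hvn'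

end QGAux

/-- For `n ≥ 3` odd, any two generating pairs of the dicyclic group `G_n`
(Mathlib's `QuaternionGroup n`) with orders `(4, 4)` and product of order `n`
are related by a group automorphism of `G_n`. -/
theorem dicyclic_generating_pairs_equivalent_signature_n (n : ℕ) (hn : 3 ≤ n) (hnodd : Odd n)
    (a b a' b' : QuaternionGroup n)
    (hgen : Subgroup.closure ({a, b} : Set (QuaternionGroup n)) = ⊤)
    (hgen' : Subgroup.closure ({a', b'} : Set (QuaternionGroup n)) = ⊤)
    (ha : orderOf a = 4) (hb : orderOf b = 4)
    (ha' : orderOf a' = 4) (hb' : orderOf b' = 4)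
    (hab : orderOf (a * b) = n) (hab' : orderOf (a' * b') = n) :
    ∃ φ : MulAut (QuaternionGroup n), φ a = a' ∧ φ b = b' := by
  haveI : NeZero n := ⟨by omega⟩
  cases a with
  | a i => exact absurd ha (QGAux.orderOf_a_ne_four hn hnodd i)
  | xa i =>
  cases b with
  | a j => exact absurd hb (QGAux.orderOf_a_ne_four hn hnodd j)
  | xa j =>
  cases a' with
  | a i' => exact absurd ha' (QGAux.orderOf_a_ne_four hn hnodd i')
  | xa i' =>
  cases b' with
  | a j' => exact absurd hb' (QGAux.orderOf_a_ne_four hn hnodd j')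
  | xa j' =>
  rw [QuaternionGroup.xa_mul_xa] at hab hab'
  obtain ⟨ud, hud⟩ := QGAux.isUnit_sub hn hnodd i j hab
  obtain ⟨ud', hud'⟩ := QGAux.isUnit_sub hn hnodd i' j' hab'
  refine ⟨QGAux.myAut (ud' * ud⁻¹) (i' - ((ud' * ud⁻¹ : (ZMod (2*n))ˣ) : ZMod (2*n)) * i), ?_, ?_⟩
  · rw [QGAux.myAut_xa]
    congr 1
    ring
  · rw [QGAux.myAut_xa]
    congr 1
    have key : ((ud' * ud⁻¹ : (ZMod (2*n))ˣ) : ZMod (2*n)) * (j - i) = j' - i' := by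
      rw [← hud, ← hud', Units.val_mul, mul_assoc, Units.inv_mul, mul_one]
    linear_combination key
end

section
/- Let n ≥ 2 and consider the permutations of the set {1, 2, …, 4n} given by η = (1,2,…,2n)(2n+1,2n+2,…,4n) (a product of two disjoint 2n-cycles) and σ = ∏_{k=1}^{n} (k, 4n+1−k, n+k, 3n+1−k) (a product of n disjoint 4-cycles). Then η^{2n} = 1, σ⁻¹ η σ = η⁻¹, and σ² = ηⁿ. -/
/-!
Write every point of `Fin (4 * n)` as `f m` with `m < 4 * n`. Since `List.formPerm` moves each
entry of a duplicate-free list to the next one and the cycles in `η` and in `σ` are disjoint,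
`η ^ k` (for `k ≤ 2 * n`) adds `k` to `m` cyclically inside its half `[0, 2n)` or `[2n, 4n)`,
and `σ` acts on indices by an explicit piecewise-affine map. The three relations thereby become
identities between piecewise-affine maps on `[0, 4n)`, checked by case analysis.
-/

open Equiv

namespace List

variable {α : Type*}

theorem prod_map_range_apply_of_forall_eq (F : ℕ → Equiv.Perm α) {n : ℕ} {x : α}
    (hx : ∀ j < n, F j x = x) : ((range n).map F).prod x = x := by
  induction n with
  | zero => rfl
  | succ n ih =>
    simp only [range_succ, map_append, prod_append, map_cons, map_nil, prod_cons, prod_nil,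
      mul_one, Equiv.Perm.mul_apply]
    rw [hx n n.lt_succ_self, ih fun j hj => hx j (by omega)]

theorem prod_map_range_apply_eq (F : ℕ → Equiv.Perm α) {n k : ℕ} (hk : k < n)
    {x : α} (hx : ∀ j < n, j ≠ k → F j x = x) (hFx : ∀ j < n, j ≠ k → F j (F k x) = F k x) :
    ((range n).map F).prod x = F k x := by
  induction n with
  | zero => omega
  | succ n ih =>
    simp only [range_succ, map_append, prod_append, map_cons, map_nil, prod_cons, prod_nil,
      mul_one, Equiv.Perm.mul_apply]
    rcases (Nat.lt_succ_iff.mp hk).eq_or_lt with rfl | hkn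
    · exact prod_map_range_apply_of_forall_eq _ fun j hj => hFx j (by omega) (by omega)
    · rw [hx n n.lt_succ_self (by omega)]
      exact ih hkn (fun j hj hne => hx j (by omega) hne) fun j hj hne => hFx j (by omega) hne

variable [DecidableEq α]

theorem formPerm_disjoint_of_disjoint {l l' : List α} (h : l.Disjoint l') :
    Equiv.Perm.Disjoint l.formPerm l'.formPerm := by
  intro x
  by_cases hx : x ∈ l
  · exact Or.inr (formPerm_apply_of_notMem fun hx' => h hx hx')
  · exact Or.inl (formPerm_apply_of_notMem hx)

theorem formPerm_map_range_pow_apply (g : ℕ → α) {m : ℕ} (hg : Set.InjOn g (Set.Iio m))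
    (k : ℕ) {i : ℕ} (hi : i < m) :
    (((range m).map g).formPerm ^ k) (g i) = g ((i + k) % m) := by
  have hnd : ((range m).map g).Nodup :=
    nodup_range.map_on fun a ha b hb => hg (by simpa using ha) (by simpa using hb)
  rw [show g i = ((range m).map g)[i]'(by simpa using hi) by simp,
    formPerm_pow_apply_getElem _ hnd]
  simp

theorem prod_map_formPerm_apply_getElem (l : ℕ → List α) {n k : ℕ} (hk : k < n)
    (hnd : (l k).Nodup) (hdisj : ∀ j < n, j ≠ k → (l j).Disjoint (l k)) {i : ℕ}
    (hi : i < (l k).length) :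
    ((range n).map fun j => (l j).formPerm).prod (l k)[i] =
      (l k)[(i + 1) % (l k).length]'(Nat.mod_lt _ (by omega)) := by
  rw [prod_map_range_apply_eq _ hk
    (fun j hj hne => formPerm_apply_of_notMem fun h => hdisj j hj hne h (getElem_mem _))
    (fun j hj hne => formPerm_apply_of_notMem fun h =>
      hdisj j hj hne h (formPerm_apply_mem_of_mem (getElem_mem _)))]
  exact formPerm_apply_getElem _ hnd i hi

end List

theorem Nat.add_mod_eq_ite_of_lt_of_le {a b m : ℕ} (ha : a < m) (hb : b ≤ m) :
    (a + b) % m = if a + b < m then a + b else a + b - m := by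
  split_ifs with h
  · exact Nat.mod_eq_of_lt h
  · rw [Nat.mod_eq_sub_mod (by omega), Nat.mod_eq_of_lt (by omega)]

section ReductionMod

variable {N : ℕ} {f : ℕ → Fin N}

theorem injOn_of_val_eq_mod (hf : ∀ m, (f m : ℕ) = m % N) : Set.InjOn f (Set.Iio N) := by
  intro a ha b hb h
  have := congrArg Fin.val h
  rwa [hf, hf, Nat.mod_eq_of_lt ha, Nat.mod_eq_of_lt hb] at this

theorem apply_val_of_val_eq_mod (hf : ∀ m, (f m : ℕ) = m % N) (x : Fin N) : f x = x :=
  Fin.ext (by rw [hf, Nat.mod_eq_of_lt x.isLt])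

theorem perm_ext_of_val_eq_mod (hf : ∀ m, (f m : ℕ) = m % N) {p q : Perm (Fin N)}
    (h : ∀ m < N, p (f m) = q (f m)) : p = q := by
  ext x
  rw [← apply_val_of_val_eq_mod hf x, h x x.isLt]

theorem nodup_map_of_val_eq_mod (hf : ∀ m, (f m : ℕ) = m % N) {l : List ℕ}
    (hl : ∀ a ∈ l, a < N) (hnd : l.Nodup) : (l.map f).Nodup :=
  hnd.map_on fun a ha b hb => injOn_of_val_eq_mod hf (hl a ha) (hl b hb)

theorem disjoint_map_of_val_eq_mod (hf : ∀ m, (f m : ℕ) = m % N) {l l' : List ℕ}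
    (hl : ∀ a ∈ l, a < N) (hl' : ∀ a ∈ l', a < N) (h : l.Disjoint l') :
    (l.map f).Disjoint (l'.map f) := by
  simp only [List.Disjoint, List.mem_map]
  rintro _ ⟨a, ha, rfl⟩ ⟨b, hb, hab⟩
  exact h ha (injOn_of_val_eq_mod hf (hl' b hb) (hl a ha) hab ▸ hb)

end ReductionMod

section Dicyclic

def etaPerm (n : ℕ) (f : ℕ → Fin (4 * n)) : Perm (Fin (4 * n)) :=
  ((List.range (2 * n)).map f).formPerm *
    ((List.range (2 * n)).map (fun k => f (2 * n + k))).formPerm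

def sigmaPerm (n : ℕ) (f : ℕ → Fin (4 * n)) : Perm (Fin (4 * n)) :=
  ((List.range n).map (fun k => ([k, 4 * n - 1 - k, n + k, 3 * n - 1 - k].map f).formPerm)).prod

def etaIndex (n k m : ℕ) : ℕ :=
  if m < 2 * n then (if m + k < 2 * n then m + k else m + k - 2 * n)
  else (if m + k < 4 * n then m + k else m + k - 2 * n)

-- The 4-cycle `k ↦ 4n-1-k ↦ n+k ↦ 3n-1-k ↦ k` (`k < n`) read off according to the quarter of `m`.
def sigmaIndex (n m : ℕ) : ℕ :=
  if m < 2 * n then 4 * n - 1 - m else if m < 3 * n then 3 * n - 1 - m else 5 * n - 1 - m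

theorem etaIndex_lt {n k m : ℕ} (hk : k ≤ 2 * n) (hm : m < 4 * n) : etaIndex n k m < 4 * n := by
  unfold etaIndex; split_ifs <;> omega

theorem sigmaIndex_lt {n m : ℕ} (hm : m < 4 * n) : sigmaIndex n m < 4 * n := by
  unfold sigmaIndex; split_ifs <;> omega

theorem etaIndex_two_mul (n m : ℕ) : etaIndex n (2 * n) m = m := by
  unfold etaIndex; split_ifs <;> omega

theorem etaIndex_one_sigmaIndex_etaIndex_one {n m : ℕ} (hm : m < 4 * n) :
    etaIndex n 1 (sigmaIndex n (etaIndex n 1 m)) = sigmaIndex n m := by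
  unfold etaIndex sigmaIndex; split_ifs <;> omega

theorem sigmaIndex_sigmaIndex {n m : ℕ} (hm : m < 4 * n) :
    sigmaIndex n (sigmaIndex n m) = etaIndex n n m := by
  unfold etaIndex sigmaIndex; split_ifs <;> omega

variable {n : ℕ} {f : ℕ → Fin (4 * n)}

theorem etaPerm_pow_apply (hf : ∀ m, (f m : ℕ) = m % (4 * n)) {k m : ℕ} (hk : k ≤ 2 * n)
    (hm : m < 4 * n) : (etaPerm n f ^ k) (f m) = f (etaIndex n k m) := by
  have hinj := injOn_of_val_eq_mod hf
  have hupper : Set.InjOn (fun i => f (2 * n + i)) (Set.Iio (2 * n)) := fun a ha b hb h =>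
    by simpa using hinj (by simp at ha ⊢; omega) (by simp at hb ⊢; omega) h
  have hdisj : ((List.range (2 * n)).map f).Disjoint
      ((List.range (2 * n)).map fun i => f (2 * n + i)) := by
    have := disjoint_map_of_val_eq_mod hf (l := List.range (2 * n))
      (l' := (List.range (2 * n)).map (2 * n + ·)) (by simp; omega) (by simp; omega)
      (by simp [List.disjoint_left]; omega)
    rwa [List.map_map] at this
  rw [etaPerm, ((List.formPerm_disjoint_of_disjoint hdisj).commute).mul_pow, Perm.mul_apply]
  rcases lt_or_ge m (2 * n) with hlow | hhigh
  · rw [Perm.pow_apply_eq_self_of_apply_eq_self (List.formPerm_apply_of_notMem fun h =>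
      hdisj (List.mem_map_of_mem (List.mem_range.2 hlow)) h),
      List.formPerm_map_range_pow_apply f (hinj.mono fun a ha => by simp at ha ⊢; omega) k hlow,
      Nat.add_mod_eq_ite_of_lt_of_le hlow hk]
    simp only [etaIndex, if_pos hlow]
  · obtain ⟨i, rfl⟩ := Nat.exists_eq_add_of_le hhigh
    have hi : i < 2 * n := by omega
    rw [List.formPerm_map_range_pow_apply (fun i => f (2 * n + i)) hupper k hi,
      Perm.pow_apply_eq_self_of_apply_eq_self (List.formPerm_apply_of_notMem fun h =>
        hdisj h (List.mem_map_of_mem (List.mem_range.2 (Nat.mod_lt _ (by omega))))),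
      Nat.add_mod_eq_ite_of_lt_of_le hi hk]
    simp only [etaIndex]
    congr 1
    split_ifs <;> omega

theorem etaPerm_apply (hf : ∀ m, (f m : ℕ) = m % (4 * n)) {m : ℕ} (hm : m < 4 * n) :
    etaPerm n f (f m) = f (etaIndex n 1 m) := by
  simpa using etaPerm_pow_apply hf (k := 1) (by omega) hm

theorem sigmaPerm_apply (hf : ∀ m, (f m : ℕ) = m % (4 * n)) {m : ℕ} (hm : m < 4 * n) :
    sigmaPerm n f (f m) = f (sigmaIndex n m) := by
  let cycle (k : ℕ) : List ℕ := [k, 4 * n - 1 - k, n + k, 3 * n - 1 - k]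
  have hbound : ∀ j < n, ∀ a ∈ cycle j, a < 4 * n := by
    intro j hj a ha; simp [cycle] at ha; omega
  have hcycle : ∀ k < n, ∀ i (hi : i < 4),
      sigmaPerm n f (f ((cycle k)[i]'(by simpa [cycle] using hi))) =
        f ((cycle k)[(i + 1) % 4]'(by simp [cycle]; omega)) := by
    intro k hk i hi
    have := List.prod_map_formPerm_apply_getElem (fun j => (cycle j).map f) hk
      (nodup_map_of_val_eq_mod hf (hbound k hk) (by simp [cycle]; omega))
      (fun j hj hjk => disjoint_map_of_val_eq_mod hf (hbound j hj) (hbound k hk)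
        (by simp [cycle, List.disjoint_left]; omega)) (i := i) (by simpa [cycle] using hi)
    simp only [List.getElem_map, List.length_map] at this
    exact this
  have hsplit : m < n ∨ n ≤ m ∧ m < 2 * n ∨ 2 * n ≤ m ∧ m < 3 * n ∨ 3 * n ≤ m := by omega
  rcases hsplit with h | h | h | h
  · convert hcycle m h 0 (by norm_num) using 3 <;>
      simp only [cycle, sigmaIndex] <;> grind
  · convert hcycle (m - n) (by omega) 2 (by norm_num) using 3 <;>
      simp only [cycle, sigmaIndex] <;> grind
  · convert hcycle (3 * n - 1 - m) (by omega) 3 (by norm_num) using 3 <;>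
      simp only [cycle, sigmaIndex] <;> grind
  · convert hcycle (4 * n - 1 - m) (by omega) 1 (by norm_num) using 3 <;>
      simp only [cycle, sigmaIndex] <;> grind

end Dicyclic

theorem dicyclic_permutation_relations_general (n : ℕ)
    (f : ℕ → Fin (4 * n)) (hf : ∀ m : ℕ, (f m : ℕ) = m % (4 * n))
    (η σ : Equiv.Perm (Fin (4 * n)))
    (hη : η = ((List.range (2 * n)).map f).formPerm *
              ((List.range (2 * n)).map (fun k => f (2 * n + k))).formPerm)
    (hσ : σ = ((List.range n).map (fun k =>
              ([k, 4 * n - 1 - k, n + k, 3 * n - 1 - k].map f).formPerm)).prod) :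
    η ^ (2 * n) = 1 ∧ σ⁻¹ * η * σ = η⁻¹ ∧ σ ^ 2 = η ^ n := by
  obtain rfl : η = etaPerm n f := hη
  obtain rfl : σ = sigmaPerm n f := hσ
  refine ⟨perm_ext_of_val_eq_mod hf fun m hm => ?_, ?_, perm_ext_of_val_eq_mod hf fun m hm => ?_⟩
  · rw [etaPerm_pow_apply hf le_rfl hm, etaIndex_two_mul n m, Perm.one_apply]
  · rw [mul_assoc, inv_mul_eq_iff_eq_mul, eq_mul_inv_iff_mul_eq]
    refine perm_ext_of_val_eq_mod hf fun m hm => ?_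
    rw [Perm.mul_apply, Perm.mul_apply, etaPerm_apply hf hm,
      sigmaPerm_apply hf (etaIndex_lt (by omega) hm),
      etaPerm_apply hf (sigmaIndex_lt (etaIndex_lt (by omega) hm)),
      etaIndex_one_sigmaIndex_etaIndex_one hm, sigmaPerm_apply hf hm]
  · rw [sq, Perm.mul_apply, sigmaPerm_apply hf hm, sigmaPerm_apply hf (sigmaIndex_lt hm),
      sigmaIndex_sigmaIndex hm, etaPerm_pow_apply hf (by omega) hm]

/-- For `n ≥ 2`, relabelling `{1, …, 4n}` as `Fin (4n) = {0, …, 4n-1}` via `m ↦ m - 1`,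
the permutations `η = (1,2,…,2n)(2n+1,…,4n)` and
`σ = ∏_{k=1}^{n} (k, 4n+1-k, n+k, 3n+1-k)` satisfy `η^{2n} = 1`, `σ⁻¹ η σ = η⁻¹` and
`σ² = ηⁿ`. Here `f : ℕ → Fin (4n)` is reduction mod `4n`, and cycles are encoded via
`List.formPerm`. -/
theorem dicyclic_permutation_relations (n : ℕ) (hn : 2 ≤ n)
    (f : ℕ → Fin (4 * n)) (hf : ∀ m : ℕ, (f m : ℕ) = m % (4 * n))
    (η σ : Equiv.Perm (Fin (4 * n)))
    (hη : η = ((List.range (2 * n)).map f).formPerm *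
              ((List.range (2 * n)).map (fun k => f (2 * n + k))).formPerm)
    (hσ : σ = ((List.range n).map (fun k =>
              ([k, 4 * n - 1 - k, n + k, 3 * n - 1 - k].map f).formPerm)).prod) :
    η ^ (2 * n) = 1 ∧ σ⁻¹ * η * σ = η⁻¹ ∧ σ ^ 2 = η ^ n :=
  dicyclic_permutation_relations_general n f hf η σ hη hσ
end

section
/- Let n ≥ 2 and consider the permutations of {1, 2, …, 4n} given by η = (1,2,…,2n)(2n+1,2n+2,…,4n) and σ = ∏_{k=1}^{n} (k, 4n+1−k, n+k, 3n+1−k). Then the subgroup of the symmetric group generated by η and σ is isomorphic to the dicyclic group G_n of order 4n, via an isomorphism sending x to η and y to σ. -/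
/-!
Number the points `0, …, 4n - 1` and write them as `j` and `2n + j` with `j : ZMod (2n)`.
In these coordinates `η` adds `1` to `j` in both halves, while `σ` sends `j ↦ 2n + (-1 - j)`
and `2n + j ↦ n - 1 - j`; the 4-cycles in the definition of `σ` are exactly the orbits of this
map. The relations `η ^ (2n) = 1`, `σ ^ 2 = η ^ n` and `σ η σ⁻¹ = η⁻¹` thus become identities
in `ZMod (2n)`, so `x ↦ η`, `y ↦ σ` extends to a homomorphism from `G_n`, whose image is
generated by `η` and `σ`. It is injective because its orbit map at `0` already is: `x ^ i`
sends `0` to `i` and `y x ^ i` sends it to `2n + (-1 - i)`.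
-/

section

variable {G : Type*} [Group G] {x y : G}

theorem pow_val_add_of_pow_eq_one {m : ℕ} [NeZero m] (hx : x ^ m = 1) (i j : ZMod m) :
    x ^ (i + j).val = x ^ i.val * x ^ j.val := by
  rw [ZMod.val_add, ← pow_add]
  conv_rhs => rw [← Nat.mod_add_div (i.val + j.val) m, pow_add, pow_mul, hx, one_pow, mul_one]

theorem pow_mul_eq_mul_inv_pow_of_mul_mul_inv_eq_inv (hxy : y * x * y⁻¹ = x⁻¹) (k : ℕ) :
    x ^ k * y = y * (x ^ k)⁻¹ := by
  have h : SemiconjBy y⁻¹ x x⁻¹ := by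
    rw [SemiconjBy]; nth_rewrite 1 [← inv_inv x, ← hxy]; group
  calc x ^ k * y = y * (y⁻¹ * x ^ k) * y := by group
    _ = y * (x⁻¹ ^ k * y⁻¹) * y := by rw [(h.pow_right k).eq]
    _ = y * (x ^ k)⁻¹ := by group

end

namespace QuaternionGroup

variable {n : ℕ} [NeZero n] {G : Type*} [Group G] {x y : G}

def lift (hx : x ^ (2 * n) = 1) (hy : y ^ 2 = x ^ n) (hxy : y * x * y⁻¹ = x⁻¹) :
    QuaternionGroup n →* G where
  toFun
    | a i => x ^ i.val
    | xa i => y * x ^ i.val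
  map_one' := by
    show x ^ (0 : ZMod (2 * n)).val = 1
    rw [ZMod.val_zero, pow_zero]
  map_mul' := by
    have hsub (i j : ZMod (2 * n)) : x ^ (j - i).val = (x ^ i.val)⁻¹ * x ^ j.val := by
      rw [eq_inv_mul_iff_mul_eq, ← pow_val_add_of_pow_eq_one hx, add_sub_cancel]
    have hn : (n : ZMod (2 * n)).val = n := ZMod.val_cast_of_lt (by have := NeZero.pos n; omega)
    have hy' : x ^ n = y * y := by rw [← hy, sq]
    rintro (i | i) (j | j)
    · simp only [a_mul_a, pow_val_add_of_pow_eq_one hx]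
    · simp only [a_mul_xa, hsub, ← mul_assoc, pow_mul_eq_mul_inv_pow_of_mul_mul_inv_eq_inv hxy]
    · simp only [xa_mul_a, pow_val_add_of_pow_eq_one hx, mul_assoc]
    · simp only [xa_mul_xa, add_sub_assoc, pow_val_add_of_pow_eq_one hx, hsub, hn, hy']
      rw [mul_assoc y (x ^ i.val), ← mul_assoc (x ^ i.val) y,
        pow_mul_eq_mul_inv_pow_of_mul_mul_inv_eq_inv hxy]
      group

variable (hx : x ^ (2 * n) = 1) (hy : y ^ 2 = x ^ n) (hxy : y * x * y⁻¹ = x⁻¹)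

@[simp] theorem lift_a (i : ZMod (2 * n)) : lift hx hy hxy (a i) = x ^ i.val := rfl

@[simp] theorem lift_xa (i : ZMod (2 * n)) : lift hx hy hxy (xa i) = y * x ^ i.val := rfl

theorem lift_a_one : lift hx hy hxy (a 1) = x := by
  rw [lift_a, ZMod.val_one_eq_one_mod, Nat.mod_eq_of_lt (by have := NeZero.pos n; omega), pow_one]

theorem lift_xa_zero : lift hx hy hxy (xa 0) = y := by
  rw [lift_xa, ZMod.val_zero, pow_zero, mul_one]

theorem range_lift : (lift hx hy hxy).range = Subgroup.closure {x, y} := by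
  apply le_antisymm
  · have hxc : x ∈ Subgroup.closure {x, y} := Subgroup.subset_closure (by simp)
    have hyc : y ∈ Subgroup.closure {x, y} := Subgroup.subset_closure (by simp)
    rintro _ ⟨i | i, rfl⟩
    · exact pow_mem hxc _
    · exact mul_mem hyc (pow_mem hxc _)
  · rw [Subgroup.closure_le, Set.insert_subset_iff, Set.singleton_subset_iff]
    exact ⟨⟨a 1, lift_a_one hx hy hxy⟩, ⟨xa 0, lift_xa_zero hx hy hxy⟩⟩

end QuaternionGroup

open Equiv

theorem List.formPerm_map_range_apply {α : Type*} [DecidableEq α] {g : ℕ → α} {k i : ℕ}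
    (hg : Set.InjOn g (Set.Iio k)) (hi : i < k) :
    ((List.range k).map g).formPerm (g i) = g ((i + 1) % k) := by
  have hnd : ((List.range k).map g).Nodup :=
    List.Nodup.map_on (fun a ha b hb h => hg (by simpa using ha) (by simpa using hb) h)
      List.nodup_range
  have h := List.formPerm_apply_getElem _ hnd i (by simpa using hi)
  simp only [List.getElem_map, List.getElem_range, List.length_map, List.length_range] at h
  exact h

theorem List.prod_map_formPerm_apply_of_mem {α : Type*} [DecidableEq α] {l : ℕ → List α}
    {m k : ℕ} (hl : ∀ i < m, ∀ j < m, i ≠ j → (l i).Disjoint (l j)) (hk : k < m) {x : α}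
    (hx : x ∈ l k) : ((List.range m).map fun i => (l i).formPerm).prod x = (l k).formPerm x := by
  induction m with
  | zero => omega
  | succ m ih =>
    rw [List.range_succ, List.map_append, List.prod_append, List.map_singleton,
      List.prod_singleton, Perm.mul_apply]
    rcases Nat.lt_succ_iff_lt_or_eq.1 hk with hk | rfl
    · rw [List.formPerm_apply_of_notMem fun h => hl k (by omega) m (by omega) (by omega) hx h,
        ih (fun i hi j hj => hl i (by omega) j (by omega)) hk]
    · have hy := List.formPerm_apply_mem_of_mem hx
      have hfix : ((List.range k).map fun i => (l i).formPerm).prod ∈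
          MulAction.stabilizer (Equiv.Perm α) ((l k).formPerm x) := by
        refine Subgroup.list_prod_mem _ fun τ hτ => MulAction.mem_stabilizer_iff.2 ?_
        obtain ⟨i, hi, rfl⟩ := List.mem_map.1 hτ
        rw [List.mem_range] at hi
        exact List.formPerm_apply_of_notMem fun h => hl k (by omega) i (by omega) (by omega) hy h
      exact MulAction.mem_stabilizer_iff.1 hfix

theorem ZMod.two_mul_natCast_self (n : ℕ) : (2 * n : ZMod (2 * n)) = 0 := by
  exact_mod_cast ZMod.natCast_self (2 * n)

open Fin.NatCast in
theorem Fin.natCast_injOn {m : ℕ} [NeZero m] : Set.InjOn (Nat.cast : ℕ → Fin m) (Set.Iio m) :=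
  fun a ha b hb h => by rwa [Fin.ext_iff, Fin.val_cast_of_lt ha, Fin.val_cast_of_lt hb] at h

namespace DicyclicPerm

open Fin.NatCast

variable (n : ℕ) [NeZero n]

def eta : Perm (Fin (4 * n)) :=
  ((List.range (2 * n)).map (↑)).formPerm *
    ((List.range (2 * n)).map fun k => ((2 * n + k : ℕ) : Fin (4 * n))).formPerm

def quad (k : ℕ) : List (Fin (4 * n)) := [k, 4 * n - 1 - k, n + k, 3 * n - 1 - k].map (↑)

def sigma : Perm (Fin (4 * n)) := ((List.range n).map fun k => (quad n k).formPerm).prod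

def lowerPt (j : ZMod (2 * n)) : Fin (4 * n) := (j.val : ℕ)

def upperPt (j : ZMod (2 * n)) : Fin (4 * n) := (2 * n + j.val : ℕ)

theorem val_lowerPt (j : ZMod (2 * n)) : (lowerPt n j).val = j.val :=
  Fin.val_cast_of_lt (by have := j.val_lt; omega)

theorem val_upperPt (j : ZMod (2 * n)) : (upperPt n j).val = 2 * n + j.val :=
  Fin.val_cast_of_lt (by have := j.val_lt; omega)

theorem natCast_eq_lowerPt {m : ℕ} (hm : m < 2 * n) : (m : Fin (4 * n)) = lowerPt n m := by
  rw [lowerPt, ZMod.val_cast_of_lt hm]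

theorem natCast_eq_upperPt {m : ℕ} (hm : m < 2 * n) :
    ((2 * n + m : ℕ) : Fin (4 * n)) = upperPt n m := by
  rw [upperPt, ZMod.val_cast_of_lt hm]

theorem exists_lowerPt_or_upperPt (x : Fin (4 * n)) :
    (∃ j, lowerPt n j = x) ∨ ∃ j, upperPt n j = x := by
  rcases lt_or_ge x.val (2 * n) with hx | hx
  · exact .inl ⟨x.val, by rw [← natCast_eq_lowerPt n hx, Fin.cast_val_eq_self]⟩
  · refine .inr ⟨(x.val - 2 * n : ℕ), ?_⟩
    rw [← natCast_eq_upperPt n (by omega), Nat.add_sub_cancel' hx, Fin.cast_val_eq_self]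

theorem perm_ext {p q : Perm (Fin (4 * n))} (hl : ∀ j, p (lowerPt n j) = q (lowerPt n j))
    (hu : ∀ j, p (upperPt n j) = q (upperPt n j)) : p = q := by
  ext1 x
  rcases exists_lowerPt_or_upperPt n x with ⟨j, rfl⟩ | ⟨j, rfl⟩
  exacts [hl j, hu j]

theorem lowerPt_notMem_upper (j : ZMod (2 * n)) :
    lowerPt n j ∉ (List.range (2 * n)).map fun k => ((2 * n + k : ℕ) : Fin (4 * n)) := by
  simp only [List.mem_map, List.mem_range, not_exists, not_and]
  intro k hk h
  rw [Fin.ext_iff, val_lowerPt, Fin.val_cast_of_lt (by omega : 2 * n + k < 4 * n)] at h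
  have := j.val_lt
  omega

theorem upperPt_notMem_lower (j : ZMod (2 * n)) :
    upperPt n j ∉ (List.range (2 * n)).map ((↑) : ℕ → Fin (4 * n)) := by
  simp only [List.mem_map, List.mem_range, not_exists, not_and]
  intro k hk h
  rw [Fin.ext_iff, val_upperPt, Fin.val_cast_of_lt (by omega : k < 4 * n)] at h
  omega

theorem eta_lowerPt (j : ZMod (2 * n)) : eta n (lowerPt n j) = lowerPt n (j + 1) := by
  have hj := j.val_lt
  rw [eta, Perm.mul_apply, List.formPerm_apply_of_notMem (lowerPt_notMem_upper n j), lowerPt,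
    List.formPerm_map_range_apply (Fin.natCast_injOn.mono (Set.Iio_subset_Iio (by omega))) hj,
    natCast_eq_lowerPt n (Nat.mod_lt _ (by omega)), ZMod.natCast_mod, Nat.cast_succ,
    ZMod.natCast_zmod_val]

theorem eta_upperPt (j : ZMod (2 * n)) : eta n (upperPt n j) = upperPt n (j + 1) := by
  have hj := j.val_lt
  rw [eta, Perm.mul_apply, upperPt,
    List.formPerm_map_range_apply (g := fun k => ((2 * n + k : ℕ) : Fin (4 * n)))
      (Fin.natCast_injOn.comp (add_right_injective (2 * n)).injOn fun k hk => by
        simp only [Set.mem_Iio] at hk ⊢; omega) hj,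
    natCast_eq_upperPt n (Nat.mod_lt _ (by omega)),
    List.formPerm_apply_of_notMem (upperPt_notMem_lower n _), ZMod.natCast_mod, Nat.cast_succ,
    ZMod.natCast_zmod_val]

theorem eta_pow_lowerPt (k : ℕ) (j : ZMod (2 * n)) :
    (eta n ^ k) (lowerPt n j) = lowerPt n (j + k) := by
  induction k with
  | zero => simp
  | succ k ih => rw [pow_succ', Perm.mul_apply, ih, eta_lowerPt, Nat.cast_succ, add_assoc]

theorem eta_pow_upperPt (k : ℕ) (j : ZMod (2 * n)) :
    (eta n ^ k) (upperPt n j) = upperPt n (j + k) := by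
  induction k with
  | zero => simp
  | succ k ih => rw [pow_succ', Perm.mul_apply, ih, eta_upperPt, Nat.cast_succ, add_assoc]

theorem map_val_quad {k : ℕ} (hk : k < n) :
    (quad n k).map Fin.val = [k, 4 * n - 1 - k, n + k, 3 * n - 1 - k] := by
  simp only [quad, List.map_cons, List.map_nil, Fin.val_cast_of_lt (by omega : k < 4 * n),
    Fin.val_cast_of_lt (by omega : 4 * n - 1 - k < 4 * n),
    Fin.val_cast_of_lt (by omega : n + k < 4 * n),
    Fin.val_cast_of_lt (by omega : 3 * n - 1 - k < 4 * n)]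

theorem mem_quad_iff {k : ℕ} (hk : k < n) (x : Fin (4 * n)) :
    x ∈ quad n k ↔
      x.val = k ∨ x.val = 4 * n - 1 - k ∨ x.val = n + k ∨ x.val = 3 * n - 1 - k := by
  rw [← List.mem_map_of_injective Fin.val_injective, map_val_quad n hk]
  simp

theorem quad_nodup {k : ℕ} (hk : k < n) : (quad n k).Nodup := by
  refine List.Nodup.of_map Fin.val ?_
  rw [map_val_quad n hk]
  have := NeZero.pos n
  simp only [List.nodup_cons, List.mem_cons, List.not_mem_nil, or_false, not_or,
    List.nodup_nil, not_false_eq_true, and_true]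
  omega

theorem sigma_apply_quad {k : ℕ} (hk : k < n) :
    sigma n k = (4 * n - 1 - k : ℕ) ∧ sigma n (4 * n - 1 - k : ℕ) = (n + k : ℕ) ∧
      sigma n (n + k : ℕ) = (3 * n - 1 - k : ℕ) ∧ sigma n (3 * n - 1 - k : ℕ) = k := by
  have hdisj : ∀ i < n, ∀ j < n, i ≠ j → (quad n i).Disjoint (quad n j) := by
    intro i hi j hj hij x hxi hxj
    rw [mem_quad_iff n hi] at hxi
    rw [mem_quad_iff n hj] at hxj
    omega
  have h (i : ℕ) (hi : i < 4) : sigma n ((quad n k)[i]'(by simpa [quad] using hi)) =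
      (quad n k)[(i + 1) % 4]'(by simp [quad]; omega) := by
    rw [sigma, List.prod_map_formPerm_apply_of_mem hdisj hk (List.getElem_mem _),
      List.formPerm_apply_getElem _ (quad_nodup n hk)]
    rfl
  exact ⟨h 0 (by norm_num), h 1 (by norm_num), h 2 (by norm_num), h 3 (by norm_num)⟩

theorem sigma_lowerPt (j : ZMod (2 * n)) : sigma n (lowerPt n j) = upperPt n (-1 - j) := by
  have hj := j.val_lt
  have h : sigma n (lowerPt n j) = ((2 * n + (2 * n - 1 - j.val) : ℕ) : Fin (4 * n)) := by
    rcases lt_or_ge j.val n with h | h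
    · have := (sigma_apply_quad n h).1
      rwa [show 4 * n - 1 - j.val = 2 * n + (2 * n - 1 - j.val) by omega] at this
    · have := (sigma_apply_quad n (k := j.val - n) (by omega)).2.2.1
      rwa [show n + (j.val - n) = j.val by omega,
        show 3 * n - 1 - (j.val - n) = 2 * n + (2 * n - 1 - j.val) by omega] at this
  rw [h, natCast_eq_upperPt n (by omega)]
  congr 1
  rw [Nat.cast_sub (by omega), Nat.cast_sub (by omega)]
  push_cast
  rw [ZMod.natCast_zmod_val]
  linear_combination ZMod.two_mul_natCast_self n

theorem sigma_upperPt (j : ZMod (2 * n)) : sigma n (upperPt n j) = lowerPt n (n - 1 - j) := by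
  have hj := j.val_lt
  rcases lt_or_ge j.val n with h | h
  · have := (sigma_apply_quad n (k := n - 1 - j.val) (by omega)).2.2.2
    rw [show 3 * n - 1 - (n - 1 - j.val) = 2 * n + j.val by omega, natCast_eq_upperPt n hj,
      ZMod.natCast_zmod_val, natCast_eq_lowerPt n (by omega)] at this
    rw [this]
    congr 1
    rw [Nat.cast_sub (by omega), Nat.cast_sub (by omega), ZMod.natCast_zmod_val, Nat.cast_one]
  · have := (sigma_apply_quad n (k := 2 * n - 1 - j.val) (by omega)).2.1
    rw [show 4 * n - 1 - (2 * n - 1 - j.val) = 2 * n + j.val by omega, natCast_eq_upperPt n hj,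
      ZMod.natCast_zmod_val, natCast_eq_lowerPt n (by omega)] at this
    rw [this]
    congr 1
    rw [Nat.cast_add, Nat.cast_sub (by omega), Nat.cast_sub (by omega)]
    push_cast
    rw [ZMod.natCast_zmod_val]
    linear_combination ZMod.two_mul_natCast_self n

theorem eta_pow_two_mul : eta n ^ (2 * n) = 1 := by
  refine perm_ext n (fun j => ?_) (fun j => ?_)
  · rw [eta_pow_lowerPt, ZMod.natCast_self, add_zero, Perm.one_apply]
  · rw [eta_pow_upperPt, ZMod.natCast_self, add_zero, Perm.one_apply]

theorem sigma_sq : sigma n ^ 2 = eta n ^ n := by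
  refine perm_ext n (fun j => ?_) (fun j => ?_)
  · rw [sq, Perm.mul_apply, sigma_lowerPt, sigma_upperPt, eta_pow_lowerPt]
    congr 1
    ring
  · rw [sq, Perm.mul_apply, sigma_upperPt, sigma_lowerPt, eta_pow_upperPt]
    congr 1
    linear_combination -ZMod.two_mul_natCast_self n

theorem eta_mul_sigma_mul_eta : eta n * sigma n * eta n = sigma n := by
  refine perm_ext n (fun j => ?_) (fun j => ?_)
  · simp only [Perm.mul_apply, eta_lowerPt, sigma_lowerPt, eta_upperPt]
    congr 1
    ring
  · simp only [Perm.mul_apply, eta_upperPt, sigma_upperPt, eta_lowerPt]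
    congr 1
    ring

theorem sigma_mul_eta_mul_sigma_inv : sigma n * eta n * (sigma n)⁻¹ = (eta n)⁻¹ := by
  rw [mul_inv_eq_iff_eq_mul, eq_inv_mul_iff_mul_eq, ← mul_assoc, eta_mul_sigma_mul_eta]

def toPerm : QuaternionGroup n →* Perm (Fin (4 * n)) :=
  QuaternionGroup.lift (eta_pow_two_mul n) (sigma_sq n) (sigma_mul_eta_mul_sigma_inv n)

theorem toPerm_a_apply_lowerPt_zero (i : ZMod (2 * n)) :
    toPerm n (.a i) (lowerPt n 0) = lowerPt n i := by
  rw [toPerm, QuaternionGroup.lift_a, eta_pow_lowerPt, zero_add, ZMod.natCast_zmod_val]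

theorem toPerm_xa_apply_lowerPt_zero (i : ZMod (2 * n)) :
    toPerm n (.xa i) (lowerPt n 0) = upperPt n (-1 - i) := by
  rw [toPerm, QuaternionGroup.lift_xa, Perm.mul_apply, eta_pow_lowerPt, zero_add,
    ZMod.natCast_zmod_val, sigma_lowerPt]

theorem toPerm_injective : Function.Injective (toPerm n) := by
  refine Function.Injective.of_comp (f := fun p => p (lowerPt n 0)) ?_
  rintro (i | i) (j | j) h
  all_goals
    simp only [Function.comp_apply, toPerm_a_apply_lowerPt_zero, toPerm_xa_apply_lowerPt_zero,
      Fin.ext_iff, val_lowerPt, val_upperPt] at h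
  · rw [ZMod.val_injective _ h]
  · have := i.val_lt; omega
  · have := j.val_lt; omega
  · rw [sub_right_injective (ZMod.val_injective _ (by omega : (-1 - i).val = (-1 - j).val))]

end DicyclicPerm

/-- For `n ≥ 2`, relabelling `{1, …, 4n}` as `Fin (4n)` via `m ↦ m - 1`, the subgroup
generated by the permutations `η = (1,2,…,2n)(2n+1,…,4n)` and
`σ = ∏_{k=1}^{n} (k, 4n+1-k, n+k, 3n+1-k)` is isomorphic to the dicyclic group `G_n`
(Mathlib's `QuaternionGroup n`) via an isomorphism sending `x = QuaternionGroup.a 1`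
to `η` and `y = QuaternionGroup.xa 0` to `σ`. -/
theorem dicyclic_permutation_representation (n : ℕ) (hn : 2 ≤ n)
    (f : ℕ → Fin (4 * n)) (hf : ∀ m : ℕ, (f m : ℕ) = m % (4 * n))
    (η σ : Equiv.Perm (Fin (4 * n)))
    (hη : η = ((List.range (2 * n)).map f).formPerm *
              ((List.range (2 * n)).map (fun k => f (2 * n + k))).formPerm)
    (hσ : σ = ((List.range n).map (fun k =>
              ([k, 4 * n - 1 - k, n + k, 3 * n - 1 - k].map f).formPerm)).prod) :
    ∃ φ : QuaternionGroup n →* Equiv.Perm (Fin (4 * n)),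
      Function.Injective φ ∧
      φ (QuaternionGroup.a 1) = η ∧
      φ (QuaternionGroup.xa 0) = σ ∧
      φ.range = Subgroup.closure {η, σ} := by
  have : NeZero n := ⟨by omega⟩
  obtain rfl : f = Fin.ofNat (4 * n) := funext fun m => Fin.ext (by rw [hf, Fin.val_ofNat])
  subst hη hσ
  exact ⟨DicyclicPerm.toPerm n, DicyclicPerm.toPerm_injective n, QuaternionGroup.lift_a_one ..,
    QuaternionGroup.lift_xa_zero .., QuaternionGroup.range_lift ..⟩
end

section
/- Let n ≥ 2 and let m₁, m₂ ≥ 2 be divisors of 2n such that gcd(2n/m₁, 2n/m₂) = 1, and suppose there exist integers a₁, a₂ with gcd(a₁, m₁) = 1, gcd(a₂, m₂) = 1 and n dividing 2a₁n/m₁ + 2a₂n/m₂. Then: if n is even, m₁ = m₂ = 2n; and if n is odd, either m₁ = m₂ = 2n, or m₁ = 2n and m₂ = n, or m₁ = n and m₂ = 2n. -/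
lemma dicyclic_aux (n k₁ k₂ a₁ a₂ m₂ : ℕ)
    (hk₂ : m₂ * k₂ = 2 * n) (hcop : Nat.gcd k₁ k₂ = 1)
    (hg₂ : Nat.gcd a₂ m₂ = 1) (hdiv : n ∣ a₁ * k₁ + a₂ * k₂) :
    Nat.Coprime k₁ n := by
  by_contra h
  obtain ⟨p, hp, hpk, hpn⟩ := Nat.Prime.not_coprime_iff_dvd.mp h
  have hsum : p ∣ a₁ * k₁ + a₂ * k₂ := hpn.trans hdiv
  have h2 : p ∣ a₂ * k₂ := (Nat.dvd_add_right (Dvd.dvd.mul_left hpk a₁)).mp hsum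
  rcases hp.dvd_mul.mp h2 with ha | hk
  · have hpm : p ∣ m₂ := by
      have hp2n : p ∣ m₂ * k₂ := by rw [hk₂]; exact hpn.mul_left 2
      rcases hp.dvd_mul.mp hp2n with h | h
      · exact h
      · have h1 : p ∣ 1 := hcop ▸ Nat.dvd_gcd hpk h
        simp [Nat.dvd_one] at h1; exact absurd h1 hp.ne_one
    have h1 : p ∣ 1 := hg₂ ▸ Nat.dvd_gcd ha hpm
    simp [Nat.dvd_one] at h1; exact hp.ne_one h1
  · have h1 : p ∣ 1 := hcop ▸ Nat.dvd_gcd hpk hk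
    simp [Nat.dvd_one] at h1; exact hp.ne_one h1

/-- Arithmetic lemma for the hyperbolic genus computation: if `m₁, m₂ ≥ 2` divide `2n`,
`gcd(2n/m₁, 2n/m₂) = 1`, `gcd(a₁, m₁) = gcd(a₂, m₂) = 1`, and
`n ∣ 2a₁n/m₁ + 2a₂n/m₂`, then for `n` even necessarily `m₁ = m₂ = 2n`, and for `n` odd
either `m₁ = m₂ = 2n`, or `m₁ = 2n, m₂ = n`, or `m₁ = n, m₂ = 2n`. -/
theorem dicyclic_genus_arithmetic_lemma (n m₁ m₂ a₁ a₂ : ℕ) (hn : 2 ≤ n)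
    (hm₁ : 2 ≤ m₁) (hm₂ : 2 ≤ m₂)
    (hd₁ : m₁ ∣ 2 * n) (hd₂ : m₂ ∣ 2 * n)
    (hcop : Nat.gcd (2 * n / m₁) (2 * n / m₂) = 1)
    (ha₁ : 0 < a₁) (ha₂ : 0 < a₂)
    (hg₁ : Nat.gcd a₁ m₁ = 1) (hg₂ : Nat.gcd a₂ m₂ = 1)
    (hdiv : n ∣ a₁ * (2 * n / m₁) + a₂ * (2 * n / m₂)) :
    (Even n → m₁ = 2 * n ∧ m₂ = 2 * n) ∧
    (Odd n → (m₁ = 2 * n ∧ m₂ = 2 * n) ∨ (m₁ = 2 * n ∧ m₂ = n) ∨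
             (m₁ = n ∧ m₂ = 2 * n)) := by
  obtain ⟨k₁, he₁⟩ := hd₁
  obtain ⟨k₂, he₂⟩ := hd₂
  have hq₁ : 2 * n / m₁ = k₁ := by
    rw [he₁]; exact Nat.mul_div_cancel_left _ (by omega)
  have hq₂ : 2 * n / m₂ = k₂ := by
    rw [he₂]; exact Nat.mul_div_cancel_left _ (by omega)
  rw [hq₁, hq₂] at hcop hdiv
  have hc₁ : Nat.Coprime k₁ n := dicyclic_aux n k₁ k₂ a₁ a₂ m₂ he₂.symm hcop hg₂ hdiv
  have hc₂ : Nat.Coprime k₂ n := by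
    apply dicyclic_aux n k₂ k₁ a₂ a₁ m₁ he₁.symm (Nat.gcd_comm k₁ k₂ ▸ hcop) hg₁
    rwa [Nat.add_comm]
  have hk₁2 : k₁ ∣ 2 := hc₁.dvd_of_dvd_mul_right ⟨m₁, by rw [he₁, Nat.mul_comm]⟩
  have hk₂2 : k₂ ∣ 2 := hc₂.dvd_of_dvd_mul_right ⟨m₂, by rw [he₂, Nat.mul_comm]⟩
  have h1 : k₁ = 1 ∨ k₁ = 2 := (Nat.dvd_prime Nat.prime_two).mp hk₁2
  have h2 : k₂ = 1 ∨ k₂ = 2 := (Nat.dvd_prime Nat.prime_two).mp hk₂2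
  constructor
  · intro hev
    obtain ⟨t, ht⟩ := hev
    have hk1 : k₁ = 1 := by
      rcases h1 with h | h
      · exact h
      · subst h; have := hc₁.eq_one_of_dvd ⟨t, by omega⟩; omega
    have hk2 : k₂ = 1 := by
      rcases h2 with h | h
      · exact h
      · subst h; have := hc₂.eq_one_of_dvd ⟨t, by omega⟩; omega
    subst hk1 hk2; constructor <;> omega
  · intro _
    rcases h1 with h | h <;> rcases h2 with h' | h' <;> subst h h'
    · left; constructor <;> omega
    · right; left; constructor <;> omega
    · right; right; constructor <;> omega
    · exfalso; simp [Nat.gcd_self] at hcop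
end

section
/- Let n ≥ 2 be even and set ρ_{2n} = exp(πi/n) ∈ ℂ. Consider complex numbers u, v with v^{2n} = uⁿ(u − 1)(u + 1)^{2n−1} and u ∉ {0, 1, −1}. Then: (1) setting Y = v^{2n−1}/(u^{n−1}(u+1)^{2n−2}), one has Y^{2n} = (−u)ⁿ(−u − 1)(−u + 1)^{2n−1}, so the map y(u,v) = (−u, Y) preserves the curve; (2) the map x(u,v) = (u, ρ_{2n} v) preserves the curve; (3) on such points y(x(u,v)) equals x applied 2n−1 times to y(u,v), i.e. y ∘ x = x⁻¹ ∘ y; (4) if additionally v ≠ 0, then y(y(u,v)) = (u, −v), i.e. y² = xⁿ on such points. -/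
open Complex

/-!
Write `f(u) = uⁿ(u-1)(u+1)^{2n-1}` and `D(u) = u^{n-1}(u+1)^{2n-2}`. Comparing the exponents of
`u`, `u - 1` and `u + 1` gives, for even `n` (the parity fixes the signs),
`f(u)^{2n-1} = f(-u) D(u)^{2n}` and `f(u)^{2n-2} = -D(u)^{2n-1} D(-u)`.
Raising `Y = v^{2n-1}/D(u)` to the powers `2n` and `2n-1`, and substituting `v^{2n} = f(u)`
(via `(2n-1)² = 1 + 2n(2n-2)` for the latter), these say that `y` preserves the curve and that
`y²(u,v) = (u,-v)`. The relations involving `x` only use that `ρ_{2n}` is a primitive `2n`-th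
root of unity.
-/

namespace SnCurve

section CommRing

variable {R : Type*} [CommRing R] {n : ℕ}

def rhs (n : ℕ) (u : R) : R := u ^ n * (u - 1) * (u + 1) ^ (2 * n - 1)

def denom (n : ℕ) (u : R) : R := u ^ (n - 1) * (u + 1) ^ (2 * n - 2)

theorem monomial_pow_two_mul_sub_one (hn : n ≠ 0) (a b c : R) :
    (c ^ n * a * b ^ (2 * n - 1)) ^ (2 * n - 1) =
      c ^ n * b * a ^ (2 * n - 1) * (c ^ (n - 1) * b ^ (2 * n - 2)) ^ (2 * n) := by
  obtain ⟨k, rfl⟩ := Nat.exists_eq_add_one_of_ne_zero hn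
  rw [show 2 * (k + 1) - 1 = 2 * k + 1 by omega, show 2 * (k + 1) - 2 = 2 * k by omega,
    Nat.add_sub_cancel]
  ring

theorem monomial_pow_two_mul_sub_two (hn : n ≠ 0) (a b c : R) :
    (c ^ n * a * b ^ (2 * n - 1)) ^ (2 * n - 2) =
      (c ^ (n - 1) * b ^ (2 * n - 2)) ^ (2 * n - 1) * (c ^ (n - 1) * a ^ (2 * n - 2)) := by
  obtain ⟨k, rfl⟩ := Nat.exists_eq_add_one_of_ne_zero hn
  rw [show 2 * (k + 1) - 1 = 2 * k + 1 by omega, show 2 * (k + 1) - 2 = 2 * k by omega,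
    Nat.add_sub_cancel]
  ring

variable (u : R)

theorem rhs_neg (hn : Even n) (hn0 : n ≠ 0) :
    rhs n (-u) = u ^ n * (u + 1) * (u - 1) ^ (2 * n - 1) := by
  have hodd : Odd (2 * n - 1) := ⟨n - 1, by omega⟩
  rw [rhs, hn.neg_pow, show -u + 1 = -(u - 1) by ring, hodd.neg_pow]
  ring

theorem denom_neg (hn : Even n) (hn0 : n ≠ 0) :
    denom n (-u) = -(u ^ (n - 1) * (u - 1) ^ (2 * n - 2)) := by
  have hodd : Odd (n - 1) := Nat.Even.sub_odd (by omega) hn odd_one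
  have heven : Even (2 * n - 2) := ⟨n - 1, by omega⟩
  rw [denom, hodd.neg_pow, show -u + 1 = -(u - 1) by ring, heven.neg_pow]
  ring

theorem rhs_pow_two_mul_sub_one (hn : Even n) (hn0 : n ≠ 0) :
    rhs n u ^ (2 * n - 1) = rhs n (-u) * denom n u ^ (2 * n) := by
  rw [rhs_neg u hn hn0, rhs, denom, monomial_pow_two_mul_sub_one hn0]

theorem rhs_pow_two_mul_sub_two (hn : Even n) (hn0 : n ≠ 0) :
    rhs n u ^ (2 * n - 2) = -(denom n u ^ (2 * n - 1) * denom n (-u)) := by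
  rw [denom_neg u hn hn0, rhs, denom, monomial_pow_two_mul_sub_two hn0]
  ring

end CommRing

section Field

variable {K : Type*} [Field K] {n : ℕ} {u v : K}

theorem denom_ne_zero (h0 : u ≠ 0) (h1 : u ≠ -1) : denom n u ≠ 0 :=
  mul_ne_zero (pow_ne_zero _ h0) (pow_ne_zero _ fun h => h1 (add_eq_zero_iff_eq_neg.mp h))

theorem div_denom_pow_two_mul (hn : Even n) (hn0 : n ≠ 0) (hcurve : v ^ (2 * n) = rhs n u)
    (hD : denom n u ≠ 0) : (v ^ (2 * n - 1) / denom n u) ^ (2 * n) = rhs n (-u) := by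
  rw [div_pow, ← pow_mul, mul_comm (2 * n - 1), pow_mul, hcurve,
    rhs_pow_two_mul_sub_one u hn hn0, mul_div_cancel_right₀ _ (pow_ne_zero _ hD)]

theorem div_denom_pow_two_mul_sub_one (hn : Even n) (hn0 : n ≠ 0)
    (hcurve : v ^ (2 * n) = rhs n u) (hD : denom n u ≠ 0) (hD' : denom n (-u) ≠ 0) :
    (v ^ (2 * n - 1) / denom n u) ^ (2 * n - 1) / denom n (-u) = -v := by
  have hexp : (2 * n - 1) * (2 * n - 1) = 1 + 2 * n * (2 * n - 2) := by
    obtain ⟨k, rfl⟩ := Nat.exists_eq_add_one_of_ne_zero hn0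
    rw [show 2 * (k + 1) - 1 = 2 * k + 1 by omega, show 2 * (k + 1) - 2 = 2 * k by omega]
    ring
  calc (v ^ (2 * n - 1) / denom n u) ^ (2 * n - 1) / denom n (-u)
      = v ^ ((2 * n - 1) * (2 * n - 1)) / (denom n u ^ (2 * n - 1) * denom n (-u)) := by
        rw [div_pow, ← pow_mul, div_div]
    _ = v * rhs n u ^ (2 * n - 2) / (denom n u ^ (2 * n - 1) * denom n (-u)) := by
        rw [hexp, pow_add, pow_one, pow_mul, hcurve]
    _ = -v := by
        rw [rhs_pow_two_mul_sub_two u hn hn0, mul_neg, neg_div,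
          mul_div_cancel_right₀ _ (mul_ne_zero (pow_ne_zero _ hD) hD')]

end Field

end SnCurve

theorem pow_sub_one_eq_inv_of_pow_eq_one {G₀ : Type*} [GroupWithZero G₀] {ζ : G₀} {N : ℕ}
    (hζ : ζ ^ N = 1) (hN : N ≠ 0) : ζ ^ (N - 1) = ζ⁻¹ := by
  have hζ0 : ζ ≠ 0 := fun h => by simp [h, hN] at hζ
  rw [pow_sub₀ _ hζ0 (by omega), hζ, pow_one, one_mul]

theorem Complex.isPrimitiveRoot_exp_pi_mul_I_div {n : ℕ} (hn : n ≠ 0) :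
    IsPrimitiveRoot (exp (Real.pi * I / n)) (2 * n) := by
  convert isPrimitiveRoot_exp (2 * n) (by omega) using 2
  push_cast
  field_simp

open SnCurve in
/-- The singular model `v^{2n} = uⁿ(u-1)(u+1)^{2n-1}` of `S_n` (for `n ≥ 2` even), with
`ρ_{2n} = exp(πi/n)`: the maps `x(u,v) = (u, ρ_{2n} v)` and
`y(u,v) = (-u, v^{2n-1}/(u^{n-1}(u+1)^{2n-2}))` preserve the curve, satisfy
`y ∘ x = x⁻¹ ∘ y`, and `y² = (u, -v)`. -/
theorem curve_Sn_singular_model_dicyclic_action (n : ℕ) (hn : 2 ≤ n) (hneven : Even n)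
    (ρ₂ : ℂ) (hρ₂ : ρ₂ = Complex.exp (↑Real.pi * Complex.I / (n : ℂ)))
    (u v : ℂ) (hcurve : v ^ (2 * n) = u ^ n * (u - 1) * (u + 1) ^ (2 * n - 1))
    (hu0 : u ≠ 0) (hu1 : u ≠ 1) (hu2 : u ≠ -1)
    (Y : ℂ) (hY : Y = v ^ (2 * n - 1) / (u ^ (n - 1) * (u + 1) ^ (2 * n - 2))) :
    Y ^ (2 * n) = (-u) ^ n * (-u - 1) * (-u + 1) ^ (2 * n - 1) ∧
    (ρ₂ * v) ^ (2 * n) = u ^ n * (u - 1) * (u + 1) ^ (2 * n - 1) ∧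
    (((-u, (ρ₂ * v) ^ (2 * n - 1) / (u ^ (n - 1) * (u + 1) ^ (2 * n - 2))) : ℂ × ℂ)
      = (-u, ρ₂⁻¹ * Y)) ∧
    (v ≠ 0 →
      (((-(-u)), Y ^ (2 * n - 1) / ((-u) ^ (n - 1) * (-u + 1) ^ (2 * n - 2))) : ℂ × ℂ)
        = (u, -v)) := by
  subst hρ₂ hY
  have hn0 : n ≠ 0 := by omega
  have hρ := isPrimitiveRoot_exp_pi_mul_I_div hn0
  have hD : denom n u ≠ 0 := denom_ne_zero hu0 hu2
  have hD' : denom n (-u) ≠ 0 := denom_ne_zero (neg_ne_zero.mpr hu0) (neg_injective.ne hu1)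
  refine ⟨div_denom_pow_two_mul hneven hn0 hcurve hD, ?_, ?_, fun _ => ?_⟩
  · rw [mul_pow, hρ.pow_eq_one, one_mul, hcurve]
  · rw [mul_pow, pow_sub_one_eq_inv_of_pow_eq_one hρ.pow_eq_one (by omega), mul_div_assoc]
  · rw [neg_neg]
    exact congrArg _ (div_denom_pow_two_mul_sub_one hneven hn0 hcurve hD hD')
end

section
/- Let n ≥ 3 be odd and set ρ_{2n} = exp(πi/n), ρ_{4n} = exp(πi/(2n)) ∈ ℂ. Consider complex numbers u, v with v^{2n} = uⁿ(u − 1)²(u + 1)^{2n−2} and v ≠ 0. Then: (1) setting Y = ρ_{4n}·u·(u² − 1)/v, one has Y^{2n} = (−u)ⁿ(−u − 1)²(−u + 1)^{2n−2}, so the map y(u,v) = (−u, Y) preserves the curve; (2) the map x(u,v) = (u, ρ_{2n} v) preserves the curve; (3) y(y(u,v)) = (u, −v), i.e. y² = xⁿ on such points (since n is odd, ρ_{2n}ⁿ = −1); (4) y(x(u,v)) = (−u, ρ_{2n}^{-1} Y), i.e. y ∘ x = x⁻¹ ∘ y on such points. -/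
open Complex

/-- The singular model `v^{2n} = uⁿ(u-1)²(u+1)^{2n-2}` of the Accola–Maclachlan surface
`R_n` (for `n ≥ 3` odd), with `ρ_{2n} = exp(πi/n)` and `ρ_{4n} = exp(πi/(2n))`: the maps
`x(u,v) = (u, ρ_{2n} v)` and `y(u,v) = (-u, ρ_{4n} u(u²-1)/v)` preserve the curve,
satisfy `y² = (u, -v)` and `y ∘ x = x⁻¹ ∘ y`. -/
theorem curve_Rn_singular_model_dicyclic_action (n : ℕ) (hn : 3 ≤ n) (hnodd : Odd n)
    (ρ₂ ρ₄ : ℂ)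
    (hρ₂ : ρ₂ = Complex.exp (↑Real.pi * Complex.I / (n : ℂ)))
    (hρ₄ : ρ₄ = Complex.exp (↑Real.pi * Complex.I / ((2 * n : ℕ) : ℂ)))
    (u v : ℂ) (hcurve : v ^ (2 * n) = u ^ n * (u - 1) ^ 2 * (u + 1) ^ (2 * n - 2))
    (hv : v ≠ 0)
    (Y : ℂ) (hY : Y = ρ₄ * u * (u ^ 2 - 1) / v) :
    Y ^ (2 * n) = (-u) ^ n * (-u - 1) ^ 2 * (-u + 1) ^ (2 * n - 2) ∧
    (ρ₂ * v) ^ (2 * n) = u ^ n * (u - 1) ^ 2 * (u + 1) ^ (2 * n - 2) ∧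
    (((-(-u)), ρ₄ * (-u) * ((-u) ^ 2 - 1) / Y) : ℂ × ℂ) = (u, -v) ∧
    (((-u, ρ₄ * u * (u ^ 2 - 1) / (ρ₂ * v)) : ℂ × ℂ) = (-u, ρ₂⁻¹ * Y)) := by
  have hn0 : (n : ℂ) ≠ 0 := Nat.cast_ne_zero.2 (by omega)
  have h2n0 : ((2 * n : ℕ) : ℂ) ≠ 0 := Nat.cast_ne_zero.2 (by omega)
  have hρ₂ne : ρ₂ ≠ 0 := hρ₂ ▸ Complex.exp_ne_zero _
  have hρ₄ne : ρ₄ ≠ 0 := hρ₄ ▸ Complex.exp_ne_zero _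
  have hρ₂pow : ρ₂ ^ (2 * n) = 1 := by
    rw [hρ₂, ← Complex.exp_nat_mul]
    rw [show ((2 * n : ℕ) : ℂ) * (↑Real.pi * Complex.I / (n : ℂ))
        = 2 * Real.pi * Complex.I by push_cast; field_simp]
    exact Complex.exp_two_pi_mul_I
  have hρ₄pow : ρ₄ ^ (2 * n) = -1 := by
    rw [hρ₄, ← Complex.exp_nat_mul]
    rw [show ((2 * n : ℕ) : ℂ) * (↑Real.pi * Complex.I / ((2 * n : ℕ) : ℂ))
        = Real.pi * Complex.I by field_simp]
    exact Complex.exp_pi_mul_I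
  -- nonvanishing of u, u-1, u+1
  have hvpow : v ^ (2 * n) ≠ 0 := pow_ne_zero _ hv
  have hu : u ≠ 0 := by
    rintro rfl; apply hvpow; rw [hcurve]
    simp [zero_pow (by omega : n ≠ 0)]
  have hu1 : u - 1 ≠ 0 := by
    intro h; apply hvpow; rw [hcurve, h]; ring
  have hu2 : u + 1 ≠ 0 := by
    intro h; apply hvpow; rw [hcurve, h]
    rw [zero_pow (by omega : 2 * n - 2 ≠ 0)]; ring
  have hsq : u ^ 2 - 1 ≠ 0 := by
    rw [show u ^ 2 - 1 = (u - 1) * (u + 1) by ring]; exact mul_ne_zero hu1 hu2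
  have hYne : Y ≠ 0 := by
    rw [hY]; exact div_ne_zero (mul_ne_zero (mul_ne_zero hρ₄ne hu) hsq) hv
  obtain ⟨m, hm⟩ := hnodd
  subst hm
  refine ⟨?_, ?_, ?_, ?_⟩
  · -- part 1
    apply mul_right_cancel₀ hvpow
    have hYv : Y * v = ρ₄ * u * (u ^ 2 - 1) := by rw [hY]; field_simp
    rw [← mul_pow, hYv]
    conv_rhs => rw [hcurve]
    rw [show u ^ 2 - 1 = (u - 1) * (u + 1) by ring, mul_pow, mul_pow, mul_pow, hρ₄pow]
    rw [Odd.neg_pow ⟨m, rfl⟩ u, show (-u + 1 : ℂ) = -(u - 1) by ring,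
      show (-u - 1 : ℂ) = -(u + 1) by ring,
      Even.neg_pow (⟨2 * m, by omega⟩ : Even (2 * (2 * m + 1) - 2)) (u - 1), neg_sq]
    simp only [show 2 * (2 * m + 1) = 4 * m + 2 by ring,
      show 2 * (2 * m + 1) - 2 = 4 * m by omega,
      show 4 * m + 2 - 2 = 4 * m by omega]
    ring
  · rw [mul_pow, hρ₂pow, one_mul, hcurve]
  · refine Prod.ext (by simp) ?_
    show ρ₄ * (-u) * ((-u) ^ 2 - 1) / Y = -v
    rw [eq_comm, eq_div_iff hYne, hY]
    field_simp
  · refine Prod.ext rfl ?_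
    show ρ₄ * u * (u ^ 2 - 1) / (ρ₂ * v) = ρ₂⁻¹ * Y
    rw [hY]
    field_simp
end

section
/- Let n ≥ 2 and let G_n be the dicyclic group of order 4n. Then G_n is not isomorphic to any cyclic group ℤ/m, nor to any dihedral group of order 2m, nor to the alternating group A₄, nor to the symmetric group S₄, nor to the alternating group A₅. -/
/-!
The dicyclic group `G_n` is non-abelian for `n ≥ 2`, and `xⁿ` is its only element of
order 2: every element outside `⟨x⟩` has order 4, and the cyclic group `⟨x⟩` of order `2n`
has a unique involution. Cyclic groups are abelian, while `DihedralGroup m` for `m ≠ 1`,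
`A₄`, `S₄` and `A₅` all contain two distinct involutions; `DihedralGroup 1` is too small.
-/

namespace Equiv.Perm

variable {α : Type*} [DecidableEq α]

theorem swap_mul_swap_ne_swap_mul_swap {x y z t : α} (h : [x, y, z, t].Nodup) :
    swap x y * swap z t ≠ swap x z * swap y t := by
  simp only [List.nodup_cons, List.mem_cons, List.not_mem_nil, List.nodup_nil] at h
  intro he
  have := congr($he t)
  simp only [Perm.mul_apply, swap_apply_right] at this
  rw [swap_apply_of_ne_of_ne (by tauto) (by tauto),
    swap_apply_of_ne_of_ne (by tauto) (by tauto)] at this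
  tauto

variable [Fintype α]

theorem swap_mul_swap_mem_alternatingGroup {x y z t : α} (hxy : x ≠ y) (hzt : z ≠ t) :
    swap x y * swap z t ∈ alternatingGroup α := by
  rw [mem_alternatingGroup, map_mul, sign_swap hxy, sign_swap hzt, neg_mul_neg, one_mul]

theorem orderOf_swap_mul_swap_of_nodup {x y z t : α} (h : [x, y, z, t].Nodup) :
    orderOf (swap x y * swap z t) = 2 := by
  rw [← lcm_cycleType, cycleType_swap_mul_swap_of_nodup h]
  rfl

end Equiv.Perm

namespace QuaternionGroup

open Equiv Perm

variable {n : ℕ}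

theorem eq_a_of_orderOf_eq_two [NeZero n] {g : QuaternionGroup n} (hg : orderOf g = 2) :
    g = a n := by
  cases g with
  | xa i => rw [orderOf_xa] at hg; omega
  | a i =>
    rw [orderOf_a] at hg
    have hpos : 0 < n := Nat.pos_of_neZero n
    have hgcd : Nat.gcd (2 * n) i.val = n := by
      have h := Nat.div_mul_cancel (Nat.gcd_dvd_left (2 * n) i.val)
      rw [hg] at h
      omega
    have hi0 : i.val ≠ 0 := by
      intro h
      rw [h, Nat.gcd_zero_right] at hgcd
      omega
    obtain ⟨k, hk⟩ : n ∣ i.val := hgcd.symm.dvd.trans (Nat.gcd_dvd_right _ _)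
    have hk1 : k = 1 := by
      have hk2 : k < 2 :=
        Nat.lt_of_mul_lt_mul_left (a := n) (by rw [← hk]; linarith [ZMod.val_lt i])
      have hk0 : k ≠ 0 := by rintro rfl; exact hi0 hk
      omega
    rw [← ZMod.natCast_zmod_val i, hk, hk1, mul_one]

theorem not_commute_a_one_xa_zero (hn : 2 ≤ n) : ¬Commute (a 1 : QuaternionGroup n) (xa 0) := by
  have : Fact (2 < 2 * n) := ⟨by omega⟩
  intro h
  have h' : (xa (0 - 1) : QuaternionGroup n) = xa (0 + 1) := by
    rw [← a_mul_xa, ← xa_mul_a]; exact h.eq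
  exact ZMod.neg_one_ne_one (by simpa using xa.inj h')

theorem isEmpty_mulEquiv_of_commGroup (hn : 2 ≤ n) {H : Type*} [CommGroup H] :
    IsEmpty (QuaternionGroup n ≃* H) :=
  ⟨fun e => not_commute_a_one_xa_zero hn <| by
    simpa using (Commute.all (e (a 1)) (e (xa 0))).map e.symm⟩

theorem isEmpty_mulEquiv_of_orderOf_eq_two [NeZero n] {H : Type*} [Group H] {x y : H}
    (hx : orderOf x = 2) (hy : orderOf y = 2) (hxy : x ≠ y) :
    IsEmpty (QuaternionGroup n ≃* H) := by
  refine ⟨fun e => hxy (e.symm.injective ?_)⟩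
  rw [eq_a_of_orderOf_eq_two (g := e.symm x) (by rwa [e.symm.orderOf_eq]),
    eq_a_of_orderOf_eq_two (g := e.symm y) (by rwa [e.symm.orderOf_eq])]

theorem isEmpty_mulEquiv_dihedralGroup [NeZero n] (m : ℕ) :
    IsEmpty (QuaternionGroup n ≃* DihedralGroup m) := by
  rcases eq_or_ne m 1 with rfl | hm
  · refine ⟨fun e => ?_⟩
    have h := Nat.card_congr e.toEquiv
    rw [Nat.card_eq_fintype_card, card, DihedralGroup.nat_card] at h
    have := NeZero.ne n
    omega
  · have : Nontrivial (ZMod m) := ZMod.nontrivial_iff.mpr hm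
    exact isEmpty_mulEquiv_of_orderOf_eq_two (DihedralGroup.orderOf_sr 0)
      (DihedralGroup.orderOf_sr 1) (fun h => zero_ne_one (DihedralGroup.sr.inj h))

theorem isEmpty_mulEquiv_alternatingGroup [NeZero n] {α : Type*}
    [Fintype α] [DecidableEq α] (hα : 4 ≤ Fintype.card α) :
    IsEmpty (QuaternionGroup n ≃* alternatingGroup α) := by
  obtain ⟨f⟩ := Function.Embedding.nonempty_of_card_le (α := Fin 4) (by simpa using hα)
  have hf : ∀ i j : Fin 4, i ≠ j → f i ≠ f j := fun _ _ => f.injective.ne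
  have h0123 : [f 0, f 1, f 2, f 3].Nodup := by simp [f.injective.eq_iff]
  have h0213 : [f 0, f 2, f 1, f 3].Nodup := by simp [f.injective.eq_iff]
  exact isEmpty_mulEquiv_of_orderOf_eq_two
    (x := ⟨_, swap_mul_swap_mem_alternatingGroup (hf 0 1 (by decide)) (hf 2 3 (by decide))⟩)
    (y := ⟨_, swap_mul_swap_mem_alternatingGroup (hf 0 2 (by decide)) (hf 1 3 (by decide))⟩)
    (by rw [Subgroup.orderOf_mk, orderOf_swap_mul_swap_of_nodup h0123])
    (by rw [Subgroup.orderOf_mk, orderOf_swap_mul_swap_of_nodup h0213])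
    (fun h => swap_mul_swap_ne_swap_mul_swap h0123 congr(Subtype.val $h))

theorem isEmpty_mulEquiv_perm [NeZero n] {α : Type*}
    [Fintype α] [DecidableEq α] (hα : 3 ≤ Fintype.card α) :
    IsEmpty (QuaternionGroup n ≃* Perm α) := by
  obtain ⟨x, y, z, hxy, hxz, hyz⟩ := Fintype.two_lt_card_iff.mp hα
  exact isEmpty_mulEquiv_of_orderOf_eq_two (x := swap x y) (y := swap x z)
    (swap_isSwap_iff.mpr hxy).orderOf (swap_isSwap_iff.mpr hxz).orderOf
    (fun h => hxy (by
      simpa [swap_apply_of_ne_of_ne hxy.symm hyz] using congr($h y)))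

end QuaternionGroup

/-- For `n ≥ 2`, the dicyclic group `G_n` (Mathlib's `QuaternionGroup n`, of order `4n`)
is not isomorphic to any cyclic group `ℤ/m`, nor to any dihedral group of order `2m`,
nor to `A₄`, nor to `S₄`, nor to `A₅`. -/
theorem dicyclic_not_spherical (n : ℕ) (hn : 2 ≤ n) :
    (∀ m : ℕ, IsEmpty (QuaternionGroup n ≃* Multiplicative (ZMod m))) ∧
    (∀ m : ℕ, IsEmpty (QuaternionGroup n ≃* DihedralGroup m)) ∧
    IsEmpty (QuaternionGroup n ≃* alternatingGroup (Fin 4)) ∧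
    IsEmpty (QuaternionGroup n ≃* Equiv.Perm (Fin 4)) ∧
    IsEmpty (QuaternionGroup n ≃* alternatingGroup (Fin 5)) := by
  have : NeZero n := ⟨by omega⟩
  exact ⟨fun _ => QuaternionGroup.isEmpty_mulEquiv_of_commGroup hn,
    QuaternionGroup.isEmpty_mulEquiv_dihedralGroup,
    QuaternionGroup.isEmpty_mulEquiv_alternatingGroup (by simp),
    QuaternionGroup.isEmpty_mulEquiv_perm (by simp),
    QuaternionGroup.isEmpty_mulEquiv_alternatingGroup (by simp)⟩
end
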